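/- arXiv:math/0111236 — 7 statements merged into one kernel-verified Lean document; each statement's English description precedes it below -/
import Mathlib

section
/- Let λ be a real number with λ ∉ {0, 2}, set μ = 2 − λ and fix ω ≠ 0. If (x, y) is a pair of functions analytic on an open set U ⊆ ℂ satisfying the normal-form Fuchsian system on U, then for all t ∈ U one has t(t−1)·x″(t) = λ(λ−1)·x(t) and t(t−1)·y″(t) = μ(μ−1)·y(t). -/
open Complex

noncomputable section

/-- The normal-form Fuchsian system with parameters `lam` (λ), `2 - lam` (μ) and `om` (ω),
at the point `t`. -/
def FuchsSys (lam om : ℝ) (x y : ℂ → ℂ) (t : ℂ) : Prop :=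
  x t = ((2 * t - 1) / (2 * (lam : ℂ))) * deriv x t
      + ((om : ℂ) / (2 * (lam : ℂ))) * deriv y t ∧
  y t = (1 / (2 * ((2 : ℂ) - (lam : ℂ)) * (om : ℂ))) * deriv x t
      + ((2 * t - 1) / (2 * ((2 : ℂ) - (lam : ℂ)))) * deriv y t

theorem fuchs_to_hypergeometric (lam om : ℝ)
    (hlam0 : lam ≠ 0) (hlam2 : lam ≠ 2) (hom : om ≠ 0)
    (U : Set ℂ) (hU : IsOpen U)
    (x y : ℂ → ℂ)
    (hx : AnalyticOnNhd ℂ x U) (hy : AnalyticOnNhd ℂ y U)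
    (hsys : ∀ t ∈ U, FuchsSys lam om x y t) :
    ∀ t ∈ U,
      t * (t - 1) * deriv (deriv x) t = (lam : ℂ) * ((lam : ℂ) - 1) * x t ∧
      t * (t - 1) * deriv (deriv y) t
        = ((2 : ℂ) - (lam : ℂ)) * (((2 : ℂ) - (lam : ℂ)) - 1) * y t := by
  have hl : (lam : ℂ) ≠ 0 := Complex.ofReal_ne_zero.mpr hlam0
  have hm : (2 : ℂ) - (lam : ℂ) ≠ 0 := by
    rw [sub_ne_zero]
    intro h
    exact hlam2 (by exact_mod_cast h.symm)
  have hw : (om : ℂ) ≠ 0 := Complex.ofReal_ne_zero.mpr hom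
  have hA : ∀ s ∈ U, (2 * s - 1) * deriv x s + (om : ℂ) * deriv y s
      = 2 * (lam : ℂ) * x s := by
    intro s hs
    have h := (hsys s hs).1
    field_simp at h
    linear_combination -h
  have hB : ∀ s ∈ U, deriv x s + (om : ℂ) * (2 * s - 1) * deriv y s
      = 2 * ((2 : ℂ) - (lam : ℂ)) * (om : ℂ) * y s := by
    intro s hs
    have h := (hsys s hs).2
    field_simp at h
    have h2 : 2 * ((2 : ℂ) - (lam : ℂ)) * (deriv x s + (om : ℂ) * (2 * s - 1) * deriv y s)
        = 2 * ((2 : ℂ) - (lam : ℂ)) * (2 * ((2 : ℂ) - (lam : ℂ)) * (om : ℂ) * y s) := by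
      linear_combination (-(2 * ((2 : ℂ) - (lam : ℂ)))) * h
    exact mul_left_cancel₀ (by simpa using hm) h2
  have hx' : AnalyticOnNhd ℂ (deriv x) U := hx.deriv
  have hy' : AnalyticOnNhd ℂ (deriv y) U := hy.deriv
  intro t ht
  have dxt : HasDerivAt x (deriv x t) t := (hx t ht).differentiableAt.hasDerivAt
  have dyt : HasDerivAt y (deriv y t) t := (hy t ht).differentiableAt.hasDerivAt
  have dx2 : HasDerivAt (deriv x) (deriv (deriv x) t) t :=
    (hx' t ht).differentiableAt.hasDerivAt
  have dy2 : HasDerivAt (deriv y) (deriv (deriv y) t) t :=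
    (hy' t ht).differentiableAt.hasDerivAt
  have h1 : HasDerivAt (fun s : ℂ => 2 * s - 1) 2 t := by
    simpa using ((hasDerivAt_id t).const_mul 2).sub_const 1
  have hFA : HasDerivAt (fun s => (2 * s - 1) * deriv x s + (om : ℂ) * deriv y s)
      (2 * deriv x t + (2 * t - 1) * deriv (deriv x) t + (om : ℂ) * deriv (deriv y) t) t := by
    have := (h1.mul dx2).add (dy2.const_mul (om : ℂ))
    refine this.congr_deriv ?_
    try ring
  have hGA : HasDerivAt (fun s => 2 * (lam : ℂ) * x s) (2 * (lam : ℂ) * deriv x t) t :=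
    dxt.const_mul _
  have hFB : HasDerivAt (fun s => deriv x s + (om : ℂ) * (2 * s - 1) * deriv y s)
      (deriv (deriv x) t + 2 * (om : ℂ) * deriv y t
        + (om : ℂ) * (2 * t - 1) * deriv (deriv y) t) t := by
    have h2 : HasDerivAt (fun s : ℂ => (om : ℂ) * (2 * s - 1)) (2 * (om : ℂ)) t := by
      simpa [mul_comm] using h1.const_mul (om : ℂ)
    have := dx2.add (h2.mul dy2)
    refine this.congr_deriv ?_
    try ring
  have hGB : HasDerivAt (fun s => 2 * ((2 : ℂ) - (lam : ℂ)) * (om : ℂ) * y s)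
      (2 * ((2 : ℂ) - (lam : ℂ)) * (om : ℂ) * deriv y t) t := dyt.const_mul _
  have dAeq : deriv (fun s => (2 * s - 1) * deriv x s + (om : ℂ) * deriv y s) t
      = deriv (fun s => 2 * (lam : ℂ) * x s) t := by
    apply Filter.EventuallyEq.deriv_eq
    filter_upwards [hU.mem_nhds ht] with s hs using hA s hs
  have dBeq : deriv (fun s => deriv x s + (om : ℂ) * (2 * s - 1) * deriv y s) t
      = deriv (fun s => 2 * ((2 : ℂ) - (lam : ℂ)) * (om : ℂ) * y s) t := by
    apply Filter.EventuallyEq.deriv_eq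
    filter_upwards [hU.mem_nhds ht] with s hs using hB s hs
  rw [hFA.deriv, hGA.deriv] at dAeq
  rw [hFB.deriv, hGB.deriv] at dBeq
  have hAt := hA t ht
  have hBt := hB t ht
  constructor
  · linear_combination ((2 * t - 1) / 4) * dAeq - (1 / 4) * dBeq
      + ((2 * (lam : ℂ) - 2) / 4) * hAt
  · have key : (om : ℂ) * (t * (t - 1) * deriv (deriv y) t)
        = (om : ℂ) * (((2 : ℂ) - (lam : ℂ)) * (((2 : ℂ) - (lam : ℂ)) - 1) * y t) := by
      linear_combination ((2 * t - 1) / 4) * dBeq - (1 / 4) * dAeq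
        + ((2 - 2 * (lam : ℂ)) / 4) * hBt
    exact mul_left_cancel₀ hw key
end
end

section
/- Let λ be a real number with λ ∉ {0, 1}, and suppose x : (−∞, ε) → ℝ is real-analytic for some ε > 0, is not identically zero, and satisfies t(t−1)·x″(t) = λ(λ−1)·x(t) for all t ∈ (−∞, ε). Then x(t) ≠ 0 for every t < 0. -/
open Set Filter Topology

noncomputable section

lemma key_lemma (c : ℝ) (hc : -(1:ℝ)/4 ≤ c) (x x' x'' : ℝ → ℝ) (a : ℝ) (ha : a < 0)
    (hdx : ∀ t ∈ Set.Icc a 0, HasDerivAt x (x' t) t)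
    (hdx' : ∀ t ∈ Set.Icc a 0, HasDerivAt x' (x'' t) t)
    (hode : ∀ t ∈ Set.Ioo a 0, x'' t = c / (t * (t - 1)) * x t)
    (hxa : x a = 0) (hx0 : x 0 = 0)
    (hpos : ∀ t ∈ Set.Ioo a 0, 0 < x t) : False := by
  set z : ℝ → ℝ := fun t => Real.sqrt (-t) with hz_def
  set z' : ℝ → ℝ := fun t => -(2 * Real.sqrt (-t))⁻¹ with hz'_def
  have hzpos : ∀ t < (0:ℝ), 0 < z t := fun t ht => Real.sqrt_pos.mpr (by linarith)
  have hzsq : ∀ t < (0:ℝ), z t ^ 2 = -t := fun t ht => Real.sq_sqrt (by linarith)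
  have hz : ∀ t < (0:ℝ), HasDerivAt z (z' t) t := by
    intro t ht
    have h1 : HasDerivAt (fun s : ℝ => -s) (-1) t := (hasDerivAt_id t).neg
    have h2 : HasDerivAt Real.sqrt (1 / (2 * Real.sqrt (-t))) (-t) :=
      Real.hasDerivAt_sqrt (by linarith)
    have h3 := h2.comp t h1
    refine h3.congr_deriv ?_
    simp [hz'_def]
  have hz' : ∀ t < (0:ℝ), HasDerivAt z' (-(1/(4*t^2)) * z t) t := by
    intro t ht
    have hzt := hzpos t ht
    have h1 : HasDerivAt (fun s => 2 * Real.sqrt (-s)) (2 * z' t) t := (hz t ht).const_mul 2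
    have h2 : HasDerivAt (fun s => (2 * Real.sqrt (-s))⁻¹)
        (-(2 * z' t) / (2 * Real.sqrt (-t))^2) t := h1.inv (by positivity)
    have h3 := h2.neg
    refine h3.congr_deriv ?_
    have hs : Real.sqrt (-t) ^ 2 = -t := hzsq t ht
    have hsne : Real.sqrt (-t) ≠ 0 := ne_of_gt hzt
    have htne : t ≠ 0 := ne_of_lt ht
    simp only [hz'_def, hz_def]
    field_simp
    nlinarith [hs, hzt, sq_nonneg t]
  set W : ℝ → ℝ := fun t => x' t * z t - x t * z' t with hW_def
  have hWd : ∀ t ∈ Ioo a 0, HasDerivAt W ((c/(t*(t-1)) + 1/(4*t^2)) * (x t * z t)) t := by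
    intro t ht
    have h1 := (hdx' t (Ioo_subset_Icc_self ht)).mul (hz t ht.2)
    have h2 := (hdx t (Ioo_subset_Icc_self ht)).mul (hz' t ht.2)
    have h3 := h1.sub h2
    refine h3.congr_deriv ?_
    rw [hode t ht]
    ring
  have hcoef : ∀ t ∈ Ioo a 0, 0 < c/(t*(t-1)) + 1/(4*t^2) := by
    intro t ht
    have ht0 : t < 0 := ht.2
    have h1 : 0 < t*(t-1) := by nlinarith
    have htne : t ≠ 0 := ne_of_lt ht0
    have h1ne : t * (t - 1) ≠ 0 := ne_of_gt h1
    have keyeq : c/(t*(t-1)) + 1/(4*t^2) = (4*t^2*c + t*(t-1)) / (4*t^2*(t*(t-1))) := by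
      rw [div_add_div _ _ h1ne (by positivity)]
      ring
    rw [keyeq]
    apply div_pos ?_ (mul_pos (by positivity) h1)
    nlinarith [sq_nonneg t]
  have hWc : ContinuousOn W (Ico a 0) := by
    intro t ht
    have ht0 : t < 0 := ht.2
    have htIcc : t ∈ Icc a 0 := ⟨ht.1, ht0.le⟩
    have h1 : ContinuousWithinAt x' (Ico a 0) t :=
      ((hdx' t htIcc).continuousAt).continuousWithinAt
    have h2 : ContinuousWithinAt x (Ico a 0) t :=
      ((hdx t htIcc).continuousAt).continuousWithinAt
    have h3 : ContinuousWithinAt z (Ico a 0) t :=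
      ((Real.continuous_sqrt.comp continuous_neg).continuousAt).continuousWithinAt
    have h4 : ContinuousWithinAt z' (Ico a 0) t := by
      apply ContinuousAt.continuousWithinAt
      apply ContinuousAt.neg
      apply ContinuousAt.inv₀
      · exact (continuous_const.mul (Real.continuous_sqrt.comp continuous_neg)).continuousAt
      · have := hzpos t ht0
        simp only [hz_def] at this
        positivity
    exact (h1.mul h3).sub (h2.mul h4)
  have hmono : StrictMonoOn W (Ico a 0) := by
    apply strictMonoOn_of_deriv_pos (convex_Ico a 0) hWc
    intro t ht
    rw [interior_Ico] at ht
    rw [(hWd t ht).deriv]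
    exact mul_pos (hcoef t ht) (mul_pos (hpos t ht) (hzpos t ht.2))
  have hWa : 0 ≤ W a := by
    have hda := hdx a ⟨le_refl a, ha.le⟩
    have hx'a : 0 ≤ x' a := by
      have hslope : Tendsto (slope x a) (𝓝[>] a) (𝓝 (x' a)) :=
        (hasDerivAt_iff_tendsto_slope.mp hda).mono_left
          (nhdsWithin_mono a fun s hs => ne_of_gt hs)
      refine ge_of_tendsto hslope ?_
      filter_upwards [Ioo_mem_nhdsGT_of_mem (⟨le_refl a, ha⟩ : a ∈ Ico a 0)] with t ht
      have : 0 < x t := hpos t ht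
      rw [slope_def_field, hxa]
      have h2 : 0 < t - a := by linarith [ht.1]
      exact (div_pos (by simpa using this) h2).le
    have hWaeq : W a = x' a * z a := by simp [hW_def, hxa]
    rw [hWaeq]
    exact mul_nonneg hx'a (Real.sqrt_nonneg _)
  have hlim : Tendsto W (𝓝[<] (0:ℝ)) (𝓝 0) := by
    have hzlim : Tendsto z (𝓝[<] (0:ℝ)) (𝓝 0) := by
      have : Tendsto z (𝓝 (0:ℝ)) (𝓝 (z 0)) :=
        ((Real.continuous_sqrt.comp continuous_neg).continuousAt)
      simpa [hz_def] using this.mono_left nhdsWithin_le_nhds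
    have hT1 : Tendsto (fun t => x' t * z t) (𝓝[<] (0:ℝ)) (𝓝 0) := by
      have hc1 : Tendsto x' (𝓝[<] (0:ℝ)) (𝓝 (x' 0)) :=
        ((hdx' 0 ⟨ha.le, le_refl 0⟩).continuousAt).continuousWithinAt
      simpa using hc1.mul hzlim
    have hT2 : Tendsto (fun t => x t * z' t) (𝓝[<] (0:ℝ)) (𝓝 0) := by
      have hslope : Tendsto (slope x 0) (𝓝[<] (0:ℝ)) (𝓝 (x' 0)) :=
        (hasDerivAt_iff_tendsto_slope.mp (hdx 0 ⟨ha.le, le_refl 0⟩)).mono_left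
          (nhdsWithin_mono 0 fun s hs => ne_of_lt hs)
      have hprod : Tendsto (fun t => slope x 0 t * (z t / 2)) (𝓝[<] (0:ℝ)) (𝓝 0) := by
        simpa using hslope.mul (hzlim.div_const 2)
      apply hprod.congr'
      filter_upwards [self_mem_nhdsWithin] with t (ht : t < 0)
      have hzt := hzpos t ht
      have hs : Real.sqrt (-t) ^ 2 = -t := hzsq t ht
      have hsne : Real.sqrt (-t) ≠ 0 := ne_of_gt hzt
      have htne : t ≠ 0 := ne_of_lt ht
      rw [slope_def_field, hx0]
      simp only [hz'_def, hz_def]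
      field_simp
      linear_combination (x t) * hs
    simpa using hT1.sub hT2
  have hs2 : a/2 ∈ Ioo a 0 := ⟨by linarith, by linarith⟩
  have h1 : W a < W (a/2) :=
    hmono ⟨le_refl a, ha⟩ ⟨hs2.1.le, hs2.2⟩ (by linarith)
  have h3 : W (a/2) ≤ 0 := by
    refine ge_of_tendsto hlim ?_
    filter_upwards [Ioo_mem_nhdsLT_of_mem (⟨hs2.2, le_refl 0⟩ : (0:ℝ) ∈ Ioc (a/2) 0)]
      with t ht
    exact (hmono ⟨hs2.1.le, hs2.2⟩ ⟨by linarith [ht.1], ht.2⟩ ht.1).le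
  exact absurd h3 (not_le.mpr (lt_of_le_of_lt hWa h1))

theorem no_zero_left_of_zero (lam : ℝ) (hlam0 : lam ≠ 0) (hlam1 : lam ≠ 1)
    (ε : ℝ) (hε : 0 < ε) (x : ℝ → ℝ)
    (hx : AnalyticOnNhd ℝ x (Set.Iio ε))
    (hnt : ∃ t < ε, x t ≠ 0)
    (hode : ∀ t < ε, t * (t - 1) * deriv (deriv x) t = lam * (lam - 1) * x t) :
    ∀ t < (0 : ℝ), x t ≠ 0 := by
  intro t₀ ht₀ hxt₀
  set c := lam * (lam - 1) with hc_def
  have hcne : c ≠ 0 := mul_ne_zero hlam0 (sub_ne_zero.mpr hlam1)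
  have hc4 : -(1:ℝ)/4 ≤ c := by nlinarith [sq_nonneg (2*lam - 1)]
  have h0mem : (0:ℝ) ∈ Set.Iio ε := hε
  have hx0 : x 0 = 0 := by
    have h := hode 0 hε
    have h2 : c * x 0 = 0 := by rw [← h]; ring
    rcases mul_eq_zero.mp h2 with h3 | h3
    · exact absurd h3 hcne
    · exact h3
  have hx' : AnalyticOnNhd ℝ (deriv x) (Set.Iio ε) := hx.deriv
  have hdx : ∀ t ∈ Set.Iio ε, HasDerivAt x (deriv x t) t :=
    fun t ht => (hx t ht).differentiableAt.hasDerivAt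
  have hdx' : ∀ t ∈ Set.Iio ε, HasDerivAt (deriv x) (deriv (deriv x) t) t :=
    fun t ht => (hx' t ht).differentiableAt.hasDerivAt
  have hnev : ∀ s ∈ Set.Iio ε, ¬ (x =ᶠ[𝓝 s] 0) := by
    intro s hs hev
    obtain ⟨t, ht, hxt⟩ := hnt
    exact hxt (hx.eqOn_zero_of_preconnected_of_eventuallyEq_zero
      (convex_Iio ε).isPreconnected hs hev ht)
  have hiso : ∀ᶠ t in 𝓝[≠] (0:ℝ), x t ≠ 0 := by
    rcases (hx 0 h0mem).eventually_eq_zero_or_eventually_ne_zero with h | h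
    · exact (hnev 0 h0mem h).elim
    · exact h
  obtain ⟨δ, hδpos, hδ⟩ : ∃ δ > 0, ∀ t : ℝ, dist t 0 < δ → t ≠ 0 → x t ≠ 0 := by
    rw [eventually_nhdsWithin_iff] at hiso
    rw [Metric.eventually_nhds_iff] at hiso
    obtain ⟨δ, hδpos, hδ⟩ := hiso
    exact ⟨δ, hδpos, fun t h1 h2 => hδ h1 h2⟩
  have ht₀δ : t₀ ≤ -δ := by
    by_contra h
    push_neg at h
    exact hδ t₀ (by rw [Real.dist_eq, sub_zero, abs_of_neg ht₀]; linarith)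
      (ne_of_lt ht₀) hxt₀
  set Z := {t : ℝ | t ∈ Set.Icc t₀ (-δ) ∧ x t = 0} with hZ_def
  have hZsub : Z ⊆ Set.Icc t₀ (-δ) := fun t ht => ht.1
  have hZne : Z.Nonempty := ⟨t₀, ⟨le_refl _, ht₀δ⟩, hxt₀⟩
  have hsubε : Set.Icc t₀ (-δ) ⊆ Set.Iio ε := fun t ht => lt_of_le_of_lt ht.2 (by linarith)
  have hZclosed : IsClosed Z := by
    have hcont : ContinuousOn x (Set.Icc t₀ (-δ)) :=
      fun t ht => ((hdx t (hsubε ht)).continuousAt).continuousWithinAt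
    have : Z = Set.Icc t₀ (-δ) ∩ x ⁻¹' {0} := by
      ext t; simp [hZ_def]
    rw [this]
    exact hcont.preimage_isClosed_of_isClosed isClosed_Icc isClosed_singleton
  have hZcomp : IsCompact Z := isCompact_Icc.of_isClosed_subset hZclosed hZsub
  set t₂ := sSup Z with ht₂_def
  have ht₂Z : t₂ ∈ Z := hZcomp.sSup_mem hZne
  have ht₂neg : t₂ < 0 := lt_of_le_of_lt ht₂Z.1.2 (by linarith)
  have hxt₂ : x t₂ = 0 := ht₂Z.2
  have hbdd : BddAbove Z := ⟨-δ, fun s hs => hs.1.2⟩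
  have hnz : ∀ t ∈ Set.Ioo t₂ 0, x t ≠ 0 := by
    intro t ht hxt
    by_cases hle : t ≤ -δ
    · have htZ : t ∈ Z := ⟨⟨le_trans ht₂Z.1.1 ht.1.le, hle⟩, hxt⟩
      exact absurd (le_csSup hbdd htZ) (not_le.mpr ht.1)
    · push_neg at hle
      exact hδ t (by rw [Real.dist_eq, sub_zero, abs_of_neg ht.2]; linarith) (ne_of_lt ht.2) hxt
  have hIccsub : Set.Icc t₂ 0 ⊆ Set.Iio ε := fun t ht => lt_of_le_of_lt ht.2 hε
  have hdx2 : ∀ t ∈ Set.Icc t₂ 0, HasDerivAt x (deriv x t) t := fun t ht => hdx t (hIccsub ht)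
  have hdx2' : ∀ t ∈ Set.Icc t₂ 0, HasDerivAt (deriv x) (deriv (deriv x) t) t :=
    fun t ht => hdx' t (hIccsub ht)
  have hode2 : ∀ t ∈ Set.Ioo t₂ 0, deriv (deriv x) t = c / (t * ( t - 1)) * x t := by
    intro t ht
    have htne : t * (t - 1) ≠ 0 := by
      have h1 : 0 < t * (t - 1) := by nlinarith [ht.2]
      exact ne_of_gt h1
    have h := hode t (lt_trans ht.2 hε)
    rw [eq_comm, div_mul_eq_mul_div, div_eq_iff htne]
    linear_combination -h
  have hsign : (∀ t ∈ Set.Ioo t₂ 0, 0 < x t) ∨ (∀ t ∈ Set.Ioo t₂ 0, x t < 0) := by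
    by_contra h
    push_neg at h
    obtain ⟨⟨u, hu, hu0⟩, ⟨v, hv, hv0⟩⟩ := h
    have hu' : x u < 0 := lt_of_le_of_ne hu0 (hnz u hu)
    have hv' : 0 < x v := lt_of_le_of_ne hv0 (Ne.symm (hnz v hv))
    have huv : u ≠ v := by rintro rfl; linarith
    have hcont : ∀ p q : ℝ, p ∈ Set.Ioo t₂ 0 → q ∈ Set.Ioo t₂ 0 →
        ContinuousOn x (Set.Icc p q) := by
      intro p q hp hq t ht
      have : t < ε := lt_of_le_of_lt ht.2 (lt_trans hq.2 hε)
      exact ((hdx t this).continuousAt).continuousWithinAt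
    rcases lt_or_gt_of_ne huv with hlt | hlt
    · obtain ⟨w, hw, hxw⟩ := intermediate_value_Ioo hlt.le (hcont u v hu hv)
        (⟨hu', hv'⟩ : (0:ℝ) ∈ Set.Ioo (x u) (x v))
      exact hnz w ⟨lt_trans hu.1 hw.1, lt_trans hw.2 hv.2⟩ hxw
    · obtain ⟨w, hw, hxw⟩ := intermediate_value_Ioo' hlt.le (hcont v u hv hu)
        (⟨hu', hv'⟩ : (0:ℝ) ∈ Set.Ioo (x u) (x v))
      exact hnz w ⟨lt_trans hv.1 hw.1, lt_trans hw.2 hu.2⟩ hxw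
  rcases hsign with hpos | hneg
  · exact key_lemma c hc4 x (deriv x) (deriv (deriv x)) t₂ ht₂neg hdx2 hdx2' hode2
      hxt₂ hx0 hpos
  · refine key_lemma c hc4 (fun t => -x t) (fun t => -(deriv x t))
      (fun t => -(deriv (deriv x) t)) t₂ ht₂neg ?_ ?_ ?_ (by simp [hxt₂]) (by simp [hx0]) ?_
    · exact fun t ht => (hdx2 t ht).neg
    · exact fun t ht => (hdx2' t ht).neg
    · intro t ht
      have := hode2 t ht
      rw [this]
      ring
    · intro t ht
      simpa using hneg t ht
end
end

section
/- Let λ be a real number with λ ∉ {0, 1}, and suppose x : (1−ε, ∞) → ℝ is real-analytic for some ε > 0, is not identically zero, and satisfies t(t−1)·x″(t) = λ(λ−1)·x(t) for all t ∈ (1−ε, ∞). Then x(t) ≠ 0 for every t > 1. -/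
open Set Filter

/-- Core Sturm/Wronskian lemma: a solution of `t(t-1)x'' = K x` with `K ≥ -1/4`
positive on `(a,b)` with `1 ≤ a < b` cannot vanish at both endpoints. -/
lemma core_lemma (K a b : ℝ) (hK : -(1/4 : ℝ) ≤ K) (ha : 1 ≤ a) (hab : a < b)
    (x : ℝ → ℝ)
    (hx1 : ∀ t ∈ Set.Ici a, HasDerivAt x (deriv x t) t)
    (hx2 : ∀ t ∈ Set.Ici a, HasDerivAt (deriv x) (deriv (deriv x) t) t)
    (hode : ∀ t ∈ Set.Ioo a b, t * (t - 1) * deriv (deriv x) t = K * x t)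
    (hpos : ∀ t ∈ Set.Ioo a b, 0 < x t)
    (hxa : x a = 0) (hxb : x b = 0) : False := by
  set W : ℝ → ℝ := fun t => deriv x t * Real.sqrt (t - a) - x t * (2 * Real.sqrt (t - a))⁻¹
    with hW
  -- derivative facts about sqrt(t - a)
  have hsq : ∀ t : ℝ, a < t → HasDerivAt (fun s => Real.sqrt (s - a))
      ((2 * Real.sqrt (t - a))⁻¹) t := by
    intro t ht
    have h0 : t - a ≠ 0 := by linarith
    have := (Real.hasDerivAt_sqrt h0).comp t ((hasDerivAt_id t).sub_const a)
    simpa [one_div, Function.comp_def] using this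
  have hsq' : ∀ t : ℝ, a < t → HasDerivAt (fun s => (2 * Real.sqrt (s - a))⁻¹)
      (-(((t - a) * Real.sqrt (t - a) * 4)⁻¹)) t := by
    intro t ht
    have htpos : 0 < t - a := by linarith
    have hs : 0 < Real.sqrt (t - a) := Real.sqrt_pos.2 htpos
    have h1 : HasDerivAt (fun s => 2 * Real.sqrt (s - a)) (2 * (2 * Real.sqrt (t - a))⁻¹) t :=
      (hsq t ht).const_mul 2
    have hne : (2 : ℝ) * Real.sqrt (t - a) ≠ 0 := by positivity
    have := h1.fun_inv hne
    refine this.congr_deriv ?_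
    have hmul : Real.sqrt (t - a) * Real.sqrt (t - a) = t - a :=
      Real.mul_self_sqrt htpos.le
    have hs0 : Real.sqrt (t - a) ≠ 0 := hs.ne'
    field_simp
    nlinarith [hmul, hs]
  -- derivative of W on (a, b)
  have hWd : ∀ t ∈ Set.Ioo a b, HasDerivAt W
      (deriv (deriv x) t * Real.sqrt (t - a) + x t * ((t - a) * Real.sqrt (t - a) * 4)⁻¹) t := by
    intro t ht
    have h1 := ((hx2 t (le_of_lt ht.1)).fun_mul (hsq t ht.1))
    have h2 := ((hx1 t (le_of_lt ht.1)).fun_mul (hsq' t ht.1))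
    have := h1.fun_sub h2
    refine this.congr_deriv ?_
    ring
  -- positivity of the derivative of W on (a,b)
  have hWpos : ∀ t ∈ Set.Ioo a b, 0 <
      deriv (deriv x) t * Real.sqrt (t - a) + x t * ((t - a) * Real.sqrt (t - a) * 4)⁻¹ := by
    intro t ht
    have htpos : 0 < t - a := by linarith [ht.1]
    have ht1 : 0 < t - 1 := by linarith [ht.1]
    have htt : 0 < t * (t - 1) := by nlinarith
    have hs : 0 < Real.sqrt (t - a) := Real.sqrt_pos.2 htpos
    have hmul : Real.sqrt (t - a) * Real.sqrt (t - a) = t - a := Real.mul_self_sqrt htpos.le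
    have hxt : 0 < x t := hpos t ht
    have hdd : deriv (deriv x) t = K * x t / (t * (t - 1)) := by
      rw [eq_div_iff htt.ne']
      linarith [hode t ht]
    rw [hdd]
    have hkey : 0 < 4 * K * (t - a) ^ 2 + t * (t - 1) := by
      nlinarith [sq_nonneg (t - a), sq_nonneg (t - 1), mul_nonneg (sub_nonneg.2 ha)
        (by linarith [ht.1] : (0:ℝ) ≤ 2 * t - a - 1)]
    have expand : K * x t / (t * (t - 1)) * Real.sqrt (t - a)
        + x t * ((t - a) * Real.sqrt (t - a) * 4)⁻¹
        = x t * (4 * K * (t - a) ^ 2 + t * (t - 1))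
          / (4 * (t * (t - 1)) * (t - a) * Real.sqrt (t - a)) := by
      set q := Real.sqrt (t - a) with hqdef
      clear_value q
      rw [← hmul]
      have hq0 : q ≠ 0 := ne_of_gt hs
      have hP : t * (t - 1) ≠ 0 := ne_of_gt htt
      have ht0' : t ≠ 0 := by linarith [ht.1]
      have ht1' : t - 1 ≠ 0 := ne_of_gt ht1
      field_simp
    rw [expand]
    positivity
  -- W is continuous on Ioc a b
  have hWc : ContinuousOn W (Set.Ioc a b) := by
    intro t ht
    have h1 : a < t := ht.1
    exact ((hx2 t h1.le).continuousAt.mul (hsq t h1).continuousAt).sub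
      (((hx1 t h1.le).continuousAt.mul (hsq' t h1).continuousAt)) |>.continuousWithinAt
  -- W is strictly monotone on Ioc a b
  have hmono : StrictMonoOn W (Set.Ioc a b) := by
    apply strictMonoOn_of_deriv_pos (convex_Ioc a b) hWc
    intro t ht
    rw [interior_Ioc] at ht
    rw [(hWd t ht).deriv]
    exact hWpos t ht
  -- W tends to 0 at a from the right
  have hlim : Tendsto W (nhdsWithin a (Set.Ioi a)) (nhds 0) := by
    have hterm1 : Tendsto (fun t => deriv x t * Real.sqrt (t - a))
        (nhdsWithin a (Set.Ioi a)) (nhds 0) := by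
      have h1 : Tendsto (fun t => deriv x t) (nhdsWithin a (Set.Ioi a)) (nhds (deriv x a)) :=
        ((hx2 a (Set.mem_Ici.2 le_rfl)).continuousAt.tendsto).mono_left nhdsWithin_le_nhds
      have h2 : Tendsto (fun t : ℝ => Real.sqrt (t - a)) (nhdsWithin a (Set.Ioi a)) (nhds 0) := by
        have : Tendsto (fun t : ℝ => Real.sqrt (t - a)) (nhds a) (nhds (Real.sqrt (a - a))) :=
          (Real.continuous_sqrt.comp (continuous_id.sub continuous_const)).tendsto a
        simpa using this.mono_left nhdsWithin_le_nhds
      simpa using h1.mul h2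
    have hterm2 : Tendsto (fun t => x t * (2 * Real.sqrt (t - a))⁻¹)
        (nhdsWithin a (Set.Ioi a)) (nhds 0) := by
      have hslope : Tendsto (slope x a) (nhdsWithin a (Set.Ioi a)) (nhds (deriv x a)) := by
        have := hasDerivAt_iff_tendsto_slope.1 (hx1 a (Set.mem_Ici.2 le_rfl))
        exact this.mono_left (nhdsWithin_mono a fun s hs => (ne_of_gt hs : s ≠ a))
      have hsq0 : Tendsto (fun t : ℝ => Real.sqrt (t - a)) (nhdsWithin a (Set.Ioi a))
          (nhds 0) := by
        have : Tendsto (fun t : ℝ => Real.sqrt (t - a)) (nhds a) (nhds (Real.sqrt (a - a))) :=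
          (Real.continuous_sqrt.comp (continuous_id.sub continuous_const)).tendsto a
        simpa using this.mono_left nhdsWithin_le_nhds
      have hhalf : Tendsto (fun t : ℝ => Real.sqrt (t - a) / 2)
          (nhdsWithin a (Set.Ioi a)) (nhds 0) := by
        simpa using hsq0.div_const 2
      have hprod := hslope.mul hhalf
      rw [mul_zero] at hprod
      apply hprod.congr'
      filter_upwards [self_mem_nhdsWithin] with t ht
      have htpos : 0 < t - a := by simpa [sub_pos] using (ht : a < t)
      have hs : 0 < Real.sqrt (t - a) := Real.sqrt_pos.2 htpos
      have hmul : Real.sqrt (t - a) * Real.sqrt (t - a) = t - a := Real.mul_self_sqrt htpos.le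
      rw [slope_def_field, hxa]
      set q := Real.sqrt (t - a) with hqdef
      clear_value q
      rw [← hmul]
      have hq0 : q ≠ 0 := ne_of_gt hs
      field_simp
      ring
    simpa only [sub_zero] using hterm1.sub hterm2
  -- midpoint
  set m := (a + b) / 2 with hm
  have ham : a < m := by simp [hm]; linarith
  have hmb : m < b := by simp [hm]; linarith
  have hmmem : m ∈ Set.Ioc a b := ⟨ham, hmb.le⟩
  have hbmem : b ∈ Set.Ioc a b := ⟨hab, le_rfl⟩
  -- 0 ≤ W m
  have h0m : 0 ≤ W m := by
    apply le_of_tendsto hlim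
    filter_upwards [Ioo_mem_nhdsGT ham] with s hs
    exact (hmono ⟨hs.1, (hs.2.trans hmb).le⟩ hmmem hs.2).le
  -- W b ≤ 0
  have hdxb : deriv x b ≤ 0 := by
    have hslope : Tendsto (slope x b) (nhdsWithin b (Set.Iio b)) (nhds (deriv x b)) := by
      have := hasDerivAt_iff_tendsto_slope.1 (hx1 b (Set.mem_Ici.2 hab.le))
      exact this.mono_left (nhdsWithin_mono b fun s hs => (ne_of_lt hs : s ≠ b))
    apply le_of_tendsto hslope
    filter_upwards [Ioo_mem_nhdsLT hab] with s hs
    rw [slope_def_field, hxb, sub_zero]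
    have h1 : 0 < x s := hpos s hs
    have h2 : s - b < 0 := by linarith [hs.2]
    exact (div_neg_of_pos_of_neg h1 h2).le
  have hWb : W b ≤ 0 := by
    have : W b = deriv x b * Real.sqrt (b - a) := by simp [hW, hxb]
    rw [this]
    exact mul_nonpos_of_nonpos_of_nonneg hdxb (Real.sqrt_nonneg _)
  exact absurd (hmono hmmem hbmem hmb) (by linarith)

noncomputable section

theorem no_zero_right_of_one (lam : ℝ) (hlam0 : lam ≠ 0) (hlam1 : lam ≠ 1)
    (ε : ℝ) (hε : 0 < ε) (x : ℝ → ℝ)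
    (hx : AnalyticOnNhd ℝ x (Set.Ioi (1 - ε)))
    (hnt : ∃ t, 1 - ε < t ∧ x t ≠ 0)
    (hode : ∀ t, 1 - ε < t → t * (t - 1) * deriv (deriv x) t = lam * (lam - 1) * x t) :
    ∀ t, (1 : ℝ) < t → x t ≠ 0 := by
  intro t0 ht0
  by_contra hzero
  set K := lam * (lam - 1) with hKdef
  have hK0 : K ≠ 0 := mul_ne_zero hlam0 (sub_ne_zero.2 hlam1)
  have hKq : -(1/4 : ℝ) ≤ K := by nlinarith [sq_nonneg (lam - 1/2)]
  have hmem : ∀ t : ℝ, 1 ≤ t → t ∈ Set.Ioi (1 - ε) := fun t ht => by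
    simp only [Set.mem_Ioi]; linarith
  have hx1zero : x 1 = 0 := by
    have h := hode 1 (by linarith)
    have : (0 : ℝ) = K * x 1 := by rw [← h]; ring
    have := this.symm
    rcases mul_eq_zero.1 this with h' | h'
    · exact absurd h' hK0
    · exact h'
  -- rule out frequent zeros near t0
  by_cases hfreq : ∃ᶠ z in nhdsWithin t0 {t0}ᶜ, x z = 0
  · have heq := hx.eqOn_zero_of_preconnected_of_frequently_eq_zero isPreconnected_Ioi
      (hmem t0 ht0.le) hfreq
    obtain ⟨t, ht, hxt⟩ := hnt
    exact hxt (heq ht)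
  rw [Filter.not_frequently] at hfreq
  have hfreq' : ∀ᶠ z in nhds t0, z ∈ ({t0}ᶜ : Set ℝ) → ¬ x z = 0 :=
    eventually_nhdsWithin_iff.1 hfreq
  obtain ⟨δ, hδpos, hδ⟩ := Metric.eventually_nhds_iff.1 hfreq'
  -- largest zero below t0
  set Z := {s : ℝ | 1 ≤ s ∧ s < t0 ∧ x s = 0} with hZdef
  have hZ1 : (1 : ℝ) ∈ Z := ⟨le_rfl, ht0, hx1zero⟩
  set d := min δ ((t0 - 1) / 2) with hd
  have hdpos : 0 < d := lt_min hδpos (by linarith)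
  have hZub : ∀ z ∈ Z, z ≤ t0 - d := by
    intro z hz
    by_contra hc
    push_neg at hc
    have hz1 : z < t0 := hz.2.1
    have hdist : dist z t0 < δ := by
      rw [Real.dist_eq, abs_of_neg (by linarith : z - t0 < 0)]
      have : d ≤ δ := min_le_left _ _
      linarith
    exact hδ hdist (by simpa using ne_of_lt hz1) hz.2.2
  have hbdd : BddAbove Z := ⟨t0 - d, hZub⟩
  set a := sSup Z with ha
  have ha1 : 1 ≤ a := le_csSup hbdd hZ1
  have hat0 : a < t0 := lt_of_le_of_lt (csSup_le ⟨1, hZ1⟩ hZub) (by linarith)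
  have hamem : a ∈ Set.Ioi (1 - ε) := hmem a ha1
  have hxa : x a = 0 := by
    by_contra hxane
    have hev : ∀ᶠ s in nhds a, x s ≠ 0 := (hx a hamem).continuousAt.eventually_ne hxane
    obtain ⟨η, hηpos, hη⟩ := Metric.eventually_nhds_iff.1 hev
    obtain ⟨z, hzZ, hzlt⟩ := exists_lt_of_lt_csSup ⟨1, hZ1⟩ (by linarith : a - η < sSup Z)
    have hza : z ≤ a := le_csSup hbdd hzZ
    exact hη (by rw [Real.dist_eq]; rw [abs_lt]; constructor <;> linarith) hzZ.2.2
  have hne : ∀ s ∈ Set.Ioo a t0, x s ≠ 0 := by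
    intro s hs hxs
    have : s ∈ Z := ⟨le_trans ha1 hs.1.le, hs.2, hxs⟩
    exact absurd (le_csSup hbdd this) (not_le.2 hs.1)
  -- derivative facts
  have hxd := hx.deriv
  have hx1' : ∀ t ∈ Set.Ici a, HasDerivAt x (deriv x t) t := fun t ht =>
    (hx t (hmem t (le_trans ha1 ht))).differentiableAt.hasDerivAt
  have hx2' : ∀ t ∈ Set.Ici a, HasDerivAt (deriv x) (deriv (deriv x) t) t := fun t ht =>
    (hxd t (hmem t (le_trans ha1 ht))).differentiableAt.hasDerivAt
  have hode' : ∀ t ∈ Set.Ioo a t0, t * (t - 1) * deriv (deriv x) t = K * x t := fun t ht =>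
    hode t (by have h := ht.1; linarith)
  -- sign of x on (a, t0)
  set m0 := (a + t0) / 2 with hm0
  have hm0mem : m0 ∈ Set.Ioo a t0 := ⟨by simp [hm0]; linarith, by simp [hm0]; linarith⟩
  have hcontIcc : ∀ u v : ℝ, a ≤ u → ContinuousOn x (Set.Icc u v) := by
    intro u v hu s hs
    exact (hx s (hmem s (le_trans ha1 (le_trans hu hs.1)))).continuousAt.continuousWithinAt
  rcases lt_or_gt_of_ne (hne m0 hm0mem) with hneg | hpos
  · -- x < 0 on (a, t0); apply core lemma to -x
    have hposall : ∀ s ∈ Set.Ioo a t0, 0 < -x s := by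
      intro s hs
      rcases lt_or_gt_of_ne (hne s hs) with h | h
      · linarith
      -- x s > 0 and x m0 < 0 : IVT gives a zero in between
      exfalso
      rcases lt_trichotomy s m0 with hlt | heq | hgt
      · obtain ⟨c, hc, hxc⟩ := intermediate_value_Ioo' hlt.le (hcontIcc s m0 hs.1.le)
          (by rw [Set.mem_Ioo]; constructor <;> linarith : (0:ℝ) ∈ Set.Ioo (x m0) (x s))
        exact hne c ⟨lt_trans hs.1 hc.1, lt_trans hc.2 hm0mem.2⟩ hxc
      · rw [heq] at h; linarith
      · obtain ⟨c, hc, hxc⟩ := intermediate_value_Ioo hgt.le (hcontIcc m0 s hm0mem.1.le)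
          (by rw [Set.mem_Ioo]; constructor <;> linarith : (0:ℝ) ∈ Set.Ioo (x m0) (x s))
        exact hne c ⟨lt_trans hm0mem.1 hc.1, lt_trans hc.2 hs.2⟩ hxc
    have hdneg : deriv (fun s => -x s) = fun s => -deriv x s := funext fun s => deriv.neg
    refine core_lemma K a t0 hKq ha1 hat0 (fun s => -x s) ?_ ?_ ?_ hposall
      (by simp [hxa]) (by simp [hzero])
    · intro t ht
      rw [hdneg]
      exact (hx1' t ht).neg
    · intro t ht
      rw [hdneg, deriv.fun_neg]
      exact (hx2' t ht).neg
    · intro t ht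
      rw [hdneg, deriv.fun_neg]
      have := hode' t ht
      ring_nf
      ring_nf at this
      linarith
  · -- x > 0 on (a, t0)
    have hposall : ∀ s ∈ Set.Ioo a t0, 0 < x s := by
      intro s hs
      rcases lt_or_gt_of_ne (hne s hs) with h | h
      swap
      · exact h
      exfalso
      rcases lt_trichotomy s m0 with hlt | heq | hgt
      · obtain ⟨c, hc, hxc⟩ := intermediate_value_Ioo hlt.le (hcontIcc s m0 hs.1.le)
          (by rw [Set.mem_Ioo]; constructor <;> linarith : (0:ℝ) ∈ Set.Ioo (x s) (x m0))
        exact hne c ⟨lt_trans hs.1 hc.1, lt_trans hc.2 hm0mem.2⟩ hxc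
      · rw [heq] at h; linarith
      · obtain ⟨c, hc, hxc⟩ := intermediate_value_Ioo' hgt.le (hcontIcc m0 s hm0mem.1.le)
          (by rw [Set.mem_Ioo]; constructor <;> linarith : (0:ℝ) ∈ Set.Ioo (x s) (x m0))
        exact hne c ⟨lt_trans hm0mem.1 hc.1, lt_trans hc.2 hs.2⟩ hxc
    exact core_lemma K a t0 hKq ha1 hat0 x hx1' hx2' hode' hposall hxa hzero
end
end

section
/- Let λ be an integer with λ ∉ {0, 1}, and suppose x : ℝ → ℝ is real-analytic on all of ℝ, is not identically zero, and satisfies t(t−1)·x″(t) = λ(λ−1)·x(t) for all t ∈ ℝ. Then x agrees with a real polynomial p of degree λ if λ ≥ 2 (respectively of degree 1−λ if λ ≤ −1), and every complex root of p is real and lies in the interval [0, 1]. -/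
open Polynomial

noncomputable section

namespace UltrasphericalAux

/-- A cone of complex numbers closed under addition and avoiding zero. -/
def Kc (ε : ℝ) (u : ℂ) : Prop := u.im < 0 ∨ (u.im = 0 ∧ 0 < ε * u.re)

lemma Kc_ne_zero {ε : ℝ} {u : ℂ} (h : Kc ε u) : u ≠ 0 := by
  rintro rfl
  rcases h with h | ⟨h1, h2⟩
  · simp at h
  · simp at h2

lemma Kc_add {ε : ℝ} {u v : ℂ} (hu : Kc ε u) (hv : Kc ε v) : Kc ε (u + v) := by
  rcases hu with h | ⟨h1, h2⟩ <;> rcases hv with g | ⟨g1, g2⟩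
  · left; simp only [Complex.add_im]; linarith
  · left; simp only [Complex.add_im]; linarith
  · left; simp only [Complex.add_im]; linarith
  · right
    constructor
    · simp only [Complex.add_im]; linarith
    · simp only [Complex.add_re, mul_add]; linarith

lemma Kc_sum {ε : ℝ} : ∀ (s : Multiset ℂ), s ≠ 0 → (∀ u ∈ s, Kc ε u) → Kc ε s.sum := by
  intro s
  induction s using Multiset.induction_on with
  | empty => intro h; exact absurd rfl h
  | cons a t ih =>
    intro _ h
    rcases eq_or_ne t 0 with rfl | ht
    · simpa using h a (Multiset.mem_cons_self a 0)
    · rw [Multiset.sum_cons]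
      exact Kc_add (h a (Multiset.mem_cons_self a t))
        (ih ht fun u hu => h u (Multiset.mem_cons_of_mem hu))

lemma eval_deriv_prod (z : ℂ) : ∀ (s : Multiset ℂ), (∀ w ∈ s, w ≠ z) →
    eval z (derivative (s.map (fun w => X - C w)).prod)
      = (s.map (fun w => (z - w)⁻¹)).sum * eval z (s.map (fun w => X - C w)).prod := by
  intro s
  induction s using Multiset.induction_on with
  | empty => simp
  | cons a t ih =>
    intro h
    have ha : a ≠ z := h a (Multiset.mem_cons_self a t)
    have ht := ih fun w hw => h w (Multiset.mem_cons_of_mem hw)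
    have hz : (z - a) ≠ 0 := sub_ne_zero.2 (Ne.symm ha)
    simp only [Multiset.map_cons, Multiset.prod_cons, derivative_mul, derivative_sub,
      derivative_X, derivative_C, sub_zero, one_mul, eval_add, eval_mul, eval_sub, eval_X,
      eval_C, Multiset.sum_cons, ht]
    field_simp


lemma no_root_outside {ε : ℝ} (P : ℂ[X]) (c : ℂ) (hc : c ≠ 0)
    (hP : P ≠ 0) (hdeg : 2 ≤ P.natDegree)
    (hode : (X * (X - 1)) * derivative (derivative P) = C c * P)
    (z : ℂ) (hz : P.IsRoot z) (hz0 : z ≠ 0) (hz1 : z ≠ 1)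
    (hcone : ∀ w ∈ P.roots, w ≠ z → Kc ε ((z - w)⁻¹)) : False := by
  classical
  have hCcne : (C c : ℂ[X]) ≠ 0 := by simpa using hc
  have hRne : C c * P ≠ 0 := mul_ne_zero hCcne hP
  have hP'' : derivative (derivative P) ≠ 0 := by
    intro h
    rw [h, mul_zero] at hode
    exact hRne hode.symm
  have hLne : (X * (X - 1)) * derivative (derivative P) ≠ 0 := by rw [hode]; exact hRne
  have hXX : ¬ (X * (X - 1) : ℂ[X]).IsRoot z := by
    simp only [IsRoot, eval_mul, eval_sub, eval_X, eval_one, mul_eq_zero, not_or]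
    exact ⟨hz0, sub_ne_zero.2 hz1⟩
  have hCc : ¬ (C c : ℂ[X]).IsRoot z := by simp [IsRoot, hc]
  have e1 : ((X * (X - 1)) * derivative (derivative P)).rootMultiplicity z
      = (derivative (derivative P)).rootMultiplicity z := by
    rw [rootMultiplicity_mul hLne, rootMultiplicity_eq_zero hXX, zero_add]
  have e2 : (C c * P).rootMultiplicity z = P.rootMultiplicity z := by
    rw [rootMultiplicity_mul hRne, rootMultiplicity_eq_zero hCc, zero_add]
  have hkey : (derivative (derivative P)).rootMultiplicity z = P.rootMultiplicity z := by
    rw [← e1, hode, e2]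
  set m := P.rootMultiplicity z with hmdef
  have hm1 : 1 ≤ m := (rootMultiplicity_pos hP).mpr hz
  have hm : m = 1 := by
    by_contra hne
    have h2 : 2 ≤ m := by omega
    have hPd : derivative P ≠ 0 := by
      intro h
      exact hP'' (by rw [h, derivative_zero])
    have d1 : (derivative P).rootMultiplicity z = m - 1 :=
      derivative_rootMultiplicity_of_root hz
    have hz' : (derivative P).IsRoot z := by
      rw [← rootMultiplicity_pos hPd, d1]; omega
    have d2 : (derivative (derivative P)).rootMultiplicity z = m - 1 - 1 := by
      rw [derivative_rootMultiplicity_of_root hz', d1]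
    omega
  have hroot'' : (derivative (derivative P)).IsRoot z := by
    rw [← rootMultiplicity_pos hP'', hkey]; omega
  have hsplit : P.Splits := IsAlgClosed.splits P
  have hcard : Multiset.card P.roots = P.natDegree := (splits_iff_card_roots).mp hsplit
  have hzmem : z ∈ P.roots := mem_roots'.mpr ⟨hP, hz⟩
  have hcz : P.roots.count z = 1 := by rw [count_roots]; exact hm
  set t := P.roots.erase z with htdef
  have hzt : z ∉ t := by
    rw [← Multiset.count_eq_zero, htdef, Multiset.count_erase_self, hcz]
  have hcons : z ::ₘ t = P.roots := Multiset.cons_erase hzmem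
  have htmem : ∀ w ∈ t, w ∈ P.roots := fun w hw => Multiset.mem_of_mem_erase hw
  have htne : ∀ w ∈ t, w ≠ z := fun w hw h => hzt (h ▸ hw)
  have ht0 : t ≠ 0 := by
    intro h
    have : Multiset.card P.roots = 1 := by rw [← hcons, h]; simp
    omega
  set Q := (t.map (fun w => X - C w)).prod with hQdef
  have hPfact : P = C P.leadingCoeff * ((X - C z) * Q) := by
    conv_lhs => rw [hsplit.eq_prod_roots, ← hcons]
    rw [Multiset.map_cons, Multiset.prod_cons]
  have hQz : eval z Q ≠ 0 := by
    rw [hQdef, eval_multiset_prod]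
    apply Multiset.prod_ne_zero
    intro h0
    rw [Multiset.map_map, Multiset.mem_map] at h0
    obtain ⟨w, hw, hw0⟩ := h0
    simp only [Function.comp_apply, eval_sub, eval_X, eval_C] at hw0
    exact (sub_ne_zero.2 (htne w hw).symm) hw0
  have hlc : P.leadingCoeff ≠ 0 := leadingCoeff_ne_zero.mpr hP
  have hQ' : eval z (derivative Q) = 0 := by
    have hPdd : eval z (derivative (derivative P))
        = P.leadingCoeff * (2 * eval z (derivative Q)) := by
      have d1 : derivative ((X - C z) * Q) = Q + (X - C z) * derivative Q := by
        rw [derivative_mul, derivative_sub, derivative_X, derivative_C, sub_zero, one_mul]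
      conv_lhs => rw [hPfact]
      rw [derivative_C_mul, d1, derivative_C_mul, derivative_add, derivative_mul,
        derivative_sub, derivative_X, derivative_C, sub_zero, one_mul]
      simp only [eval_mul, eval_add, eval_sub, eval_X, eval_C, sub_self, zero_mul, mul_zero]
      ring
    have h0 := hroot''
    rw [IsRoot, hPdd] at h0
    rcases mul_eq_zero.mp h0 with h | h
    · exact absurd h hlc
    · rcases mul_eq_zero.mp h with h | h
      · norm_num at h
      · exact h
  have hsum0 : (t.map (fun w => (z - w)⁻¹)).sum = 0 := by
    have := eval_deriv_prod z t htne
    rw [← hQdef, hQ'] at this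
    rcases mul_eq_zero.mp this.symm with h | h
    · exact h
    · exact absurd h hQz
  have hK : Kc ε ((t.map (fun w => (z - w)⁻¹)).sum) := by
    apply Kc_sum
    · simpa [Multiset.map_eq_zero] using ht0
    · intro u hu
      obtain ⟨w, hw, rfl⟩ := Multiset.mem_map.mp hu
      exact hcone w (htmem w hw) (htne w hw)
  exact Kc_ne_zero hK hsum0


lemma roots_in_unit (P : ℂ[X]) (c : ℂ) (hc : c ≠ 0) (hP : P ≠ 0) (hdeg : 2 ≤ P.natDegree)
    (hode : (X * (X - 1)) * derivative (derivative P) = C c * P)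
    (hconj : ∀ w ∈ P.roots, (starRingEnd ℂ) w ∈ P.roots) :
    ∀ w ∈ P.roots, w.im = 0 ∧ 0 ≤ w.re ∧ w.re ≤ 1 := by
  classical
  have him : ∀ w ∈ P.roots, w.im ≤ 0 := by
    by_contra hcon
    push_neg at hcon
    obtain ⟨w₀, hw₀, hw₀im⟩ := hcon
    set T := P.roots.toFinset with hT
    have hTne : T.Nonempty := ⟨w₀, Multiset.mem_toFinset.mpr hw₀⟩
    obtain ⟨z₁, hz₁T, hz₁max⟩ := T.exists_max_image (fun w => w.im) hTne
    have hz₁T' : z₁ ∈ T.filter (fun w => w.im = z₁.im) :=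
      Finset.mem_filter.mpr ⟨hz₁T, rfl⟩
    obtain ⟨z, hzT', hzmax⟩ := (T.filter (fun w => w.im = z₁.im)).exists_max_image
      (fun w => w.re) ⟨z₁, hz₁T'⟩
    have hzT : z ∈ T := (Finset.mem_filter.mp hzT').1
    have hzim : z.im = z₁.im := (Finset.mem_filter.mp hzT').2
    have hzroots : z ∈ P.roots := Multiset.mem_toFinset.mp hzT
    have hzim_pos : 0 < z.im := by
      have := hz₁max w₀ (Multiset.mem_toFinset.mpr hw₀)
      rw [hzim]; linarith
    have hz0 : z ≠ 0 := by
      intro h; rw [h] at hzim_pos; simp at hzim_pos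
    have hz1 : z ≠ 1 := by
      intro h; rw [h] at hzim_pos; simp at hzim_pos
    refine no_root_outside (ε := 1) P c hc hP hdeg hode z (mem_roots'.mp hzroots).2 hz0 hz1 ?_
    intro w hw hwz
    have hdne : z - w ≠ 0 := sub_ne_zero.2 (Ne.symm hwz)
    have hnormSq : 0 < Complex.normSq (z - w) := Complex.normSq_pos.mpr hdne
    have hwim : w.im ≤ z.im := by
      have := hz₁max w (Multiset.mem_toFinset.mpr hw)
      rw [hzim]; linarith
    rcases lt_or_eq_of_le hwim with hlt | heq
    · left
      rw [Complex.inv_im]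
      apply div_neg_of_neg_of_pos _ hnormSq
      simp only [Complex.sub_im]
      linarith
    · have hwT' : w ∈ T.filter (fun w => w.im = z₁.im) :=
        Finset.mem_filter.mpr ⟨Multiset.mem_toFinset.mpr hw, by rw [← hzim, heq]⟩
      have hre : w.re ≤ z.re := by
        have := hzmax w hwT'
        simpa using this
      have hrelt : w.re < z.re := by
        rcases lt_or_eq_of_le hre with h | h
        · exact h
        · exact absurd (Complex.ext h heq) hwz
      right
      constructor
      · rw [Complex.inv_im]
        simp only [Complex.sub_im, heq, sub_self, neg_zero, zero_div]
      · rw [Complex.inv_re, one_mul]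
        apply div_pos _ hnormSq
        simp only [Complex.sub_re]
        linarith
  have him0 : ∀ w ∈ P.roots, w.im = 0 := by
    intro w hw
    have h1 := him w hw
    have h2 := him _ (hconj w hw)
    rw [Complex.conj_im] at h2
    linarith
  have hre1 : ∀ w ∈ P.roots, w.re ≤ 1 := by
    by_contra hcon
    push_neg at hcon
    obtain ⟨w₀, hw₀, hw₀re⟩ := hcon
    set T := P.roots.toFinset with hT
    have hTne : T.Nonempty := ⟨w₀, Multiset.mem_toFinset.mpr hw₀⟩
    obtain ⟨z, hzT, hzmax⟩ := T.exists_max_image (fun w => w.re) hTne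
    have hzroots : z ∈ P.roots := Multiset.mem_toFinset.mp hzT
    have hzre : 1 < z.re := by
      have := hzmax w₀ (Multiset.mem_toFinset.mpr hw₀)
      linarith
    have hz0 : z ≠ 0 := by
      intro h; rw [h] at hzre; norm_num at hzre
    have hz1 : z ≠ 1 := by
      intro h; rw [h] at hzre; norm_num at hzre
    refine no_root_outside (ε := 1) P c hc hP hdeg hode z (mem_roots'.mp hzroots).2 hz0 hz1 ?_
    intro w hw hwz
    have hdne : z - w ≠ 0 := sub_ne_zero.2 (Ne.symm hwz)
    have hnormSq : 0 < Complex.normSq (z - w) := Complex.normSq_pos.mpr hdne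
    have hwim : w.im = z.im := by rw [him0 w hw, him0 z hzroots]
    have hre : w.re ≤ z.re := by
      have := hzmax w (Multiset.mem_toFinset.mpr hw)
      simpa using this
    have hrelt : w.re < z.re := by
      rcases lt_or_eq_of_le hre with h | h
      · exact h
      · exact absurd (Complex.ext h hwim) hwz
    right
    constructor
    · rw [Complex.inv_im]
      simp only [Complex.sub_im, hwim, sub_self, neg_zero, zero_div]
    · rw [Complex.inv_re, one_mul]
      apply div_pos _ hnormSq
      simp only [Complex.sub_re]
      linarith
  have hre0 : ∀ w ∈ P.roots, 0 ≤ w.re := by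
    by_contra hcon
    push_neg at hcon
    obtain ⟨w₀, hw₀, hw₀re⟩ := hcon
    set T := P.roots.toFinset with hT
    have hTne : T.Nonempty := ⟨w₀, Multiset.mem_toFinset.mpr hw₀⟩
    obtain ⟨z, hzT, hzmin⟩ := T.exists_min_image (fun w => w.re) hTne
    have hzroots : z ∈ P.roots := Multiset.mem_toFinset.mp hzT
    have hzre : z.re < 0 := by
      have := hzmin w₀ (Multiset.mem_toFinset.mpr hw₀)
      linarith
    have hz0 : z ≠ 0 := by
      intro h; rw [h] at hzre; norm_num at hzre
    have hz1 : z ≠ 1 := by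
      intro h; rw [h] at hzre; norm_num at hzre
    refine no_root_outside (ε := -1) P c hc hP hdeg hode z (mem_roots'.mp hzroots).2 hz0 hz1 ?_
    intro w hw hwz
    have hdne : z - w ≠ 0 := sub_ne_zero.2 (Ne.symm hwz)
    have hnormSq : 0 < Complex.normSq (z - w) := Complex.normSq_pos.mpr hdne
    have hwim : w.im = z.im := by rw [him0 w hw, him0 z hzroots]
    have hre : z.re ≤ w.re := by
      have := hzmin w (Multiset.mem_toFinset.mpr hw)
      simpa using this
    have hrelt : z.re < w.re := by
      rcases lt_or_eq_of_le hre with h | h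
      · exact h
      · exact absurd (Complex.ext h.symm hwim) hwz
    right
    constructor
    · rw [Complex.inv_im]
      simp only [Complex.sub_im, hwim, sub_self, neg_zero, zero_div]
    · rw [Complex.inv_re]
      have : (z - w).re / Complex.normSq (z - w) < 0 := by
        apply div_neg_of_neg_of_pos _ hnormSq
        simp only [Complex.sub_re]
        linarith
      nlinarith
  exact fun w hw => ⟨him0 w hw, hre0 w hw, hre1 w hw⟩


lemma zero_of_iteratedDeriv_zero {f : ℝ → ℝ} (hf : AnalyticOnNhd ℝ f Set.univ)
    (h : ∀ k, iteratedDeriv k f 0 = 0) : ∀ t, f t = 0 := by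
  have h0 : AnalyticAt ℝ f 0 := hf 0 (Set.mem_univ 0)
  obtain ⟨ps, r, hr⟩ := h0
  have hzero : ∀ᶠ t in nhds (0 : ℝ), f t = 0 := by
    filter_upwards [EMetric.ball_mem_nhds (0 : ℝ) hr.r_pos] with y hy
    have hsum := hr.hasSum_iteratedFDeriv hy
    have hterm : ∀ n : ℕ, ((n.factorial : ℕ) : ℝ)⁻¹ • iteratedFDeriv ℝ n f 0 (fun _ => y) = 0 := by
      intro n
      rw [iteratedFDeriv_apply_eq_iteratedDeriv_mul_prod, h n]
      simp
    rw [funext hterm] at hsum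
    have := hsum.unique hasSum_zero
    simpa using this
  have heq : f =ᶠ[nhds (0 : ℝ)] 0 := hzero
  have := hf.eqOn_zero_of_preconnected_of_eventuallyEq_zero isPreconnected_univ
    (Set.mem_univ (0 : ℝ)) heq
  intro t
  exact this (Set.mem_univ t)

lemma iteratedDeriv_poly (p : ℝ[X]) :
    ∀ k, iteratedDeriv k (fun t => p.eval t) = fun t => (derivative^[k] p).eval t := by
  intro k
  induction k with
  | zero => simp [iteratedDeriv_zero]
  | succ k ih =>
    rw [iteratedDeriv_succ, ih]
    funext t
    rw [Function.iterate_succ_apply']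
    exact Polynomial.deriv (p := (⇑derivative)^[k] p)

lemma iteratedDeriv_poly_zero (p : ℝ[X]) (k : ℕ) :
    iteratedDeriv k (fun t => p.eval t) 0 = ((k.factorial : ℕ) : ℝ) * p.coeff k := by
  rw [iteratedDeriv_poly]
  show eval (0:ℝ) ((⇑derivative)^[k] p) = _
  rw [← coeff_zero_eq_eval_zero, coeff_iterate_derivative]
  simp [Nat.descFactorial_self, mul_comm]



end UltrasphericalAux

open UltrasphericalAux in
theorem ultraspherical_polynomial_case (lam : ℤ) (hlam0 : lam ≠ 0) (hlam1 : lam ≠ 1)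
    (x : ℝ → ℝ)
    (hx : AnalyticOnNhd ℝ x Set.univ)
    (hnt : ∃ t : ℝ, x t ≠ 0)
    (hode : ∀ t : ℝ, t * (t - 1) * deriv (deriv x) t
      = (lam : ℝ) * ((lam : ℝ) - 1) * x t) :
    ∃ p : Polynomial ℝ,
      (∀ t : ℝ, x t = p.eval t) ∧
      (2 ≤ lam → p.natDegree = lam.toNat) ∧
      (lam ≤ -1 → p.natDegree = (1 - lam).toNat) ∧
      (∀ z : ℂ, Polynomial.aeval z p = 0 → z.im = 0 ∧ 0 ≤ z.re ∧ z.re ≤ 1) := by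
  classical
  have hsm : ContDiff ℝ (⊤ : ℕ∞) x :=
    contDiff_iff_contDiffAt.mpr fun t => (hx t (Set.mem_univ t)).contDiffAt
  set c : ℝ := (lam : ℝ) * ((lam : ℝ) - 1) with hc
  set D : ℕ → ℝ → ℝ := fun k => iteratedDeriv k x with hD
  have hderiv : ∀ (k : ℕ) (t : ℝ), HasDerivAt (D k) (D (k + 1) t) t := by
    intro k t
    have h1 : DifferentiableAt ℝ (D k) t := by
      have := hsm.differentiable_iteratedDeriv k ?_
      · exact this.differentiableAt
      · exact_mod_cast Ne.lt_top (by simp : ((k : ℕ∞)) ≠ ⊤)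
    have h2 : D (k + 1) = deriv (D k) := iteratedDeriv_succ
    rw [h2]
    exact h1.hasDerivAt
  have hE : ∀ (k : ℕ) (t : ℝ),
      t * (t - 1) * D (k + 2) t + (k : ℝ) * (2 * t - 1) * D (k + 1) t
        + (k : ℝ) * ((k : ℝ) - 1) * D k t = c * D k t := by
    intro k
    induction k with
    | zero =>
      intro t
      have h2 : D 2 t = deriv (deriv x) t := by
        have h2' : D 2 = deriv (deriv x) := by
          show iteratedDeriv 2 x = _
          rw [iteratedDeriv_succ, iteratedDeriv_one]
        rw [h2']
      have h0 : D 0 t = x t := by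
        show iteratedDeriv 0 x t = x t
        rw [iteratedDeriv_zero]
      push_cast
      rw [h2, h0]
      simpa using hode t
    | succ k ih =>
      intro t
      have hfun : (fun s => s * (s - 1) * D (k + 2) s + (k : ℝ) * (2 * s - 1) * D (k + 1) s
          + (k : ℝ) * ((k : ℝ) - 1) * D k s) = fun s => c * D k s := funext ih
      have hA : HasDerivAt (fun s : ℝ => s * (s - 1)) (2 * t - 1) t := by
        have : HasDerivAt (fun s : ℝ => s * (s - 1)) (1 * (t - 1) + t * 1) t := (hasDerivAt_id t).mul ((hasDerivAt_id t).sub_const 1)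
        convert this using 1
        simp; ring
      have hB : HasDerivAt (fun s : ℝ => (k : ℝ) * (2 * s - 1)) ((k : ℝ) * 2) t := by
        have h2 : HasDerivAt (fun s : ℝ => 2 * s - 1) 2 t := by
          simpa using ((hasDerivAt_id t).const_mul (2:ℝ)).sub_const 1
        simpa using h2.const_mul (k : ℝ)
      have hL := ((hA.fun_mul (hderiv (k + 2) t)).fun_add (hB.fun_mul (hderiv (k + 1) t))).fun_add
        ((hderiv k t).const_mul ((k : ℝ) * ((k : ℝ) - 1)))
      rw [hfun] at hL
      have hR : HasDerivAt (fun s => c * D k s) (c * D (k + 1) t) t :=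
        (hderiv k t).const_mul c
      have heq := hL.unique hR
      have e3 : k + 1 + 2 = k + 3 := rfl
      have e2 : k + 1 + 1 = k + 2 := rfl
      rw [e3, e2]
      push_cast
      linear_combination heq
  have hR0 : ∀ k : ℕ, (k : ℝ) * D (k + 1) 0 = ((k : ℝ) * ((k : ℝ) - 1) - c) * D k 0 := by
    intro k
    linear_combination (-1 : ℝ) * hE k 0
  have hlam2 : 2 ≤ lam ∨ lam ≤ -1 := by omega
  set n : ℕ := if 2 ≤ lam then lam.toNat else (1 - lam).toNat with hn
  have hn2 : 2 ≤ n := by rw [hn]; split_ifs with h <;> omega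
  have hcn : c = (n : ℝ) * ((n : ℝ) - 1) := by
    rw [hn]
    split_ifs with h
    · have h1 : ((lam.toNat : ℕ) : ℝ) = (lam : ℝ) := by
        exact_mod_cast congrArg (Int.cast : ℤ → ℝ) (Int.toNat_of_nonneg (by omega))
      rw [h1, hc]
    · have h1 : (((1 - lam).toNat : ℕ) : ℝ) = 1 - (lam : ℝ) := by
        exact_mod_cast congrArg (Int.cast : ℤ → ℝ) (Int.toNat_of_nonneg (by omega))
      rw [h1, hc]; ring
  have hnR : (2 : ℝ) ≤ (n : ℝ) := by exact_mod_cast hn2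
  have hc0 : c ≠ 0 := by rw [hcn]; nlinarith
  have hx00 : D 0 0 = 0 := by
    have h := hR0 0
    have h2 : c * D 0 0 = 0 := by push_cast at h; linear_combination h
    exact (mul_eq_zero.mp h2).resolve_left hc0
  have hD10 : D 1 0 ≠ 0 := by
    intro h10
    have hall : ∀ k, D k 0 = 0 := by
      intro k
      induction k with
      | zero => exact hx00
      | succ k ih =>
        match k, ih with
        | 0, _ => exact h10
        | (m+1), ih =>
          have h := hR0 (m + 1)
          rw [ih, mul_zero] at h
          have hm : ((m : ℝ) + 1) ≠ 0 := by positivity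
          have := mul_eq_zero.mp h
          rcases this with h' | h'
          · exfalso; apply hm; push_cast at h'; linarith
          · exact h'
    obtain ⟨t, ht⟩ := hnt
    exact ht (zero_of_iteratedDeriv_zero hx hall t)
  have hhigh : ∀ k, n ≤ k → D (k + 1) 0 = 0 := by
    intro k hk
    induction k, hk using Nat.le_induction with
    | base =>
      have h := hR0 n
      have hfac : ((n : ℝ) * ((n : ℝ) - 1) - c) = 0 := by rw [hcn]; ring
      rw [hfac, zero_mul] at h
      have hnne : (n : ℝ) ≠ 0 := Nat.cast_ne_zero.mpr (by omega)
      exact (mul_eq_zero.mp h).resolve_left hnne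
    | succ k hk ih =>
      have h := hR0 (k + 1)
      rw [ih, mul_zero] at h
      have hnne : ((k : ℝ) + 1) ≠ 0 := by positivity
      have h' : ((k + 1 : ℕ) : ℝ) ≠ 0 := by push_cast; exact hnne
      exact (mul_eq_zero.mp h).resolve_left h'
  have hnz : ∀ k, 1 ≤ k → k ≤ n → D k 0 ≠ 0 := by
    intro k
    induction k with
    | zero => intro h; omega
    | succ k ih =>
      intro _ hkn
      rcases Nat.eq_zero_or_pos k with rfl | hk1
      · exact hD10
      · have ih' := ih hk1 (by omega)
        have hfac : ((k : ℝ) * ((k : ℝ) - 1) - c) ≠ 0 := by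
          rw [hcn]
          have hkn' : (k : ℝ) < (n : ℝ) := by exact_mod_cast (by omega : k < n)
          have hk1' : (1 : ℝ) ≤ (k : ℝ) := by exact_mod_cast hk1
          nlinarith
        intro hzero
        have h := hR0 k
        rw [hzero, mul_zero] at h
        rcases mul_eq_zero.mp h.symm with h' | h'
        · exact hfac h'
        · exact ih' h'
  set p : ℝ[X] := ∑ k ∈ Finset.range (n + 1), C (D k 0 / ((k.factorial : ℕ) : ℝ)) * X ^ k
    with hpdef
  have hcoeff : ∀ k, p.coeff k = if k ≤ n then D k 0 / ((k.factorial : ℕ) : ℝ) else 0 := by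
    intro k
    rw [hpdef, finset_sum_coeff]
    simp only [coeff_C_mul, coeff_X_pow, mul_ite, mul_one, mul_zero]
    rw [Finset.sum_ite_eq (Finset.range (n + 1)) k]
    simp [Nat.lt_succ_iff]
  have hDk0 : ∀ k, n < k → D k 0 = 0 := by
    intro k hk
    obtain ⟨m, rfl⟩ : ∃ m, k = m + 1 := ⟨k - 1, by omega⟩
    exact hhigh m (by omega)
  have hpD : ∀ k, iteratedDeriv k (fun t => p.eval t) 0 = D k 0 := by
    intro k
    rw [iteratedDeriv_poly_zero, hcoeff k]
    by_cases hk : k ≤ n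
    · rw [if_pos hk]
      have : ((k.factorial : ℕ) : ℝ) ≠ 0 := Nat.cast_ne_zero.mpr k.factorial_ne_zero
      field_simp
    · rw [if_neg hk, mul_zero, hDk0 k (by omega)]
  have hxp : ∀ t, x t = p.eval t := by
    have hpan : AnalyticOnNhd ℝ (fun t => p.eval t) Set.univ := by
      have := AnalyticOnNhd.eval_polynomial (𝕜 := ℝ) (A := ℝ) p
      simpa using this
    have hyan : AnalyticOnNhd ℝ (x - fun t => p.eval t) Set.univ := hx.sub hpan
    have hpc : ContDiff ℝ (⊤ : ℕ∞) (fun t => p.eval t) :=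
      contDiff_iff_contDiffAt.mpr fun t => (hpan t (Set.mem_univ t)).contDiffAt
    have hyder : ∀ k, iteratedDeriv k (x - fun t => p.eval t) 0 = 0 := by
      intro k
      have h1 : iteratedDeriv k (x - fun t => p.eval t) 0
          = iteratedDeriv k x 0 - iteratedDeriv k (fun t => p.eval t) 0 := by
        rw [← iteratedDerivWithin_univ, ← iteratedDerivWithin_univ (f := x),
          ← iteratedDerivWithin_univ (f := fun t => p.eval t)]
        exact iteratedDerivWithin_sub (Set.mem_univ 0) uniqueDiffOn_univ
          (hsm.of_le (m := (k : WithTop ℕ∞)) (by exact_mod_cast le_top)).contDiffWithinAt (hpc.of_le (m := (k : WithTop ℕ∞)) (by exact_mod_cast le_top)).contDiffWithinAt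
      rw [h1, hpD k]
      show D k 0 - D k 0 = 0
      ring
    have hz := zero_of_iteratedDeriv_zero hyan hyder
    intro t
    have := hz t
    simp only [Pi.sub_apply] at this
    linarith
  have hpcoeffn : p.coeff n ≠ 0 := by
    rw [hcoeff n, if_pos le_rfl]
    exact div_ne_zero (hnz n (by omega) le_rfl) (Nat.cast_ne_zero.mpr n.factorial_ne_zero)
  have hpdeg : p.natDegree = n := by
    apply le_antisymm
    · apply natDegree_le_iff_coeff_eq_zero.mpr
      intro m hm
      rw [hcoeff m, if_neg (by omega)]
    · exact le_natDegree_of_ne_zero hpcoeffn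
  have hp0 : p ≠ 0 := fun h => hpcoeffn (by simp [h])
  -- polynomial ODE
  have hdx : deriv x = fun t => (derivative p).eval t := by
    have hxf : x = fun t => p.eval t := funext hxp
    funext t
    rw [hxf]
    exact Polynomial.deriv (p := p)
  have hddx : ∀ t, deriv (deriv x) t = (derivative (derivative p)).eval t := by
    intro t
    rw [hdx]
    exact Polynomial.deriv (p := derivative p)
  have hodep : (X * (X - 1) : ℝ[X]) * derivative (derivative p) = C c * p := by
    apply Polynomial.funext
    intro t
    have h := hode t
    rw [hddx t, hxp t] at h
    simp only [eval_mul, eval_sub, eval_X, eval_one, eval_C]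
    exact h
  -- move to ℂ
  set P : ℂ[X] := p.map (algebraMap ℝ ℂ) with hPdef
  have hPne : P ≠ 0 := by
    rw [hPdef]
    exact (Polynomial.map_ne_zero_iff (algebraMap ℝ ℂ).injective).mpr hp0
  have hPdeg : 2 ≤ P.natDegree := by
    rw [hPdef, natDegree_map, hpdeg]; exact hn2
  have hcC : ((c : ℂ)) ≠ 0 := by exact_mod_cast hc0
  have hodeP : (X * (X - 1) : ℂ[X]) * derivative (derivative P) = C (c : ℂ) * P := by
    have h := congrArg (Polynomial.map (algebraMap ℝ ℂ)) hodep
    simp only [Polynomial.map_mul, Polynomial.map_sub, Polynomial.map_one, map_X, map_C,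
      Complex.coe_algebraMap] at h
    rw [hPdef, derivative_map, derivative_map]
    exact h
  have hrootiff : ∀ z : ℂ, P.IsRoot z ↔ aeval z p = 0 := by
    intro z
    rw [hPdef, IsRoot, eval_map, aeval_def]
  have hconj : ∀ w ∈ P.roots, (starRingEnd ℂ) w ∈ P.roots := by
    intro w hw
    obtain ⟨-, hw2⟩ := mem_roots'.mp hw
    refine mem_roots'.mpr ⟨hPne, ?_⟩
    rw [hrootiff] at hw2 ⊢
    rw [Polynomial.aeval_conj, hw2, map_zero]
  have hroots := roots_in_unit P (c : ℂ) hcC hPne hPdeg hodeP hconj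
  refine ⟨p, hxp, ?_, ?_, ?_⟩
  · intro h
    rw [hpdeg, hn, if_pos h]
  · intro h
    rw [hpdeg, hn, if_neg (by omega)]
  · intro z hz
    have hzmem : z ∈ P.roots := mem_roots'.mpr ⟨hPne, (hrootiff z).mpr hz⟩
    exact hroots z hzmem
end
end

section
/- Let λ be a real number with λ ≠ 1, let ε > 0, and suppose w : (−∞, ε) → ℝ is differentiable, satisfies w(0) = 0 and the Riccati equation ((t² − t)/(λ − 1))·w′(t) = w(t)² − 2t·w(t) + t for all t ∈ (−∞, ε). Then w has constant sign on (−∞, 0): either w(t) > 0 for all t < 0, or w(t) < 0 for all t < 0. -/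
noncomputable section

open Set Filter Topology

/-- Near `0⁻`, the quadratic `w t ^ 2 - 2 t (w t) + t` is negative, because `w t = O(t)`. -/
private lemma riccati_qneg (ε : ℝ) (hε : 0 < ε) (w : ℝ → ℝ)
    (hw : ∀ t < ε, DifferentiableAt ℝ w t) (hw0 : w 0 = 0) :
    ∃ δ > 0, ∀ t, -δ < t → t < 0 → (w t) ^ 2 - 2 * t * w t + t < 0 := by
  have hd : HasDerivAt w (deriv w 0) 0 := (hw 0 hε).hasDerivAt
  have hs := hasDerivAt_iff_tendsto_slope.mp hd
  set C : ℝ := |deriv w 0| + 1 with hC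
  have hCpos : 0 < C := by positivity
  have habs : Tendsto (fun t => |slope w 0 t|) (𝓝[≠] (0:ℝ)) (𝓝 |deriv w 0|) :=
    hs.abs
  have hev : ∀ᶠ t in 𝓝[≠] (0:ℝ), |slope w 0 t| < C :=
    habs.eventually_lt_const (by simp [hC])
  rw [eventually_nhdsWithin_iff] at hev
  rw [Metric.eventually_nhds_iff] at hev
  obtain ⟨δ₀, hδ₀, hball⟩ := hev
  refine ⟨min δ₀ (1 / (C ^ 2 + 2 * C + 1)), lt_min hδ₀ (by positivity), ?_⟩
  intro t ht1 ht2
  have htδ₀ : -δ₀ < t := lt_of_le_of_lt (neg_le_neg (min_le_left _ _)) ht1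
  have htC : -(1 / (C ^ 2 + 2 * C + 1)) < t :=
    lt_of_le_of_lt (neg_le_neg (min_le_right _ _)) ht1
  have hdist : dist t (0:ℝ) < δ₀ := by
    rw [Real.dist_eq, sub_zero, abs_of_neg ht2]; linarith
  have hsl : |slope w 0 t| < C := hball hdist (ne_of_lt ht2)
  rw [slope_def_field, hw0] at hsl
  have ht0 : t - 0 ≠ 0 := by rw [sub_zero]; exact ne_of_lt ht2
  have habs2 : |w t| < C * |t| := by
    have := (abs_div (w t - 0) (t - 0)) ▸ hsl
    rw [div_lt_iff₀ (abs_pos.mpr ht0)] at this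
    simpa using this
  have habst : |t| = -t := abs_of_neg ht2
  rw [habst] at habs2
  have h1 : w t ≤ -(C * t) := by
    have := le_abs_self (w t); linarith
  have h2 : C * t ≤ w t := by
    have := neg_abs_le (w t); linarith
  have hfac : 0 < 1 + (C ^ 2 + 2 * C) * t := by
    have h3 : (C ^ 2 + 2 * C + 1) * (-t) < 1 := by
      rw [neg_lt] at htC
      calc (C ^ 2 + 2 * C + 1) * (-t) < (C ^ 2 + 2 * C + 1) * (1 / (C ^ 2 + 2 * C + 1)) := by
            apply mul_lt_mul_of_pos_left _ (by positivity)
            linarith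
        _ = 1 := by field_simp
    nlinarith
  have hw2 : w t ^ 2 ≤ C ^ 2 * t ^ 2 := by
    nlinarith [mul_nonneg (by linarith : (0:ℝ) ≤ w t - C * t)
      (by linarith : (0:ℝ) ≤ -(C * t) - w t)]
  have h3 : -2 * t * w t ≤ 2 * C * t ^ 2 := by
    nlinarith [mul_le_mul_of_nonneg_left h1 (by linarith : (0:ℝ) ≤ -2 * t)]
  nlinarith [hw2, h3, mul_neg_of_neg_of_pos ht2 hfac]

private lemma riccati_deriv_formula (lam : ℝ) (hlam : lam ≠ 1)
    (ε : ℝ) (hε : 0 < ε) (w : ℝ → ℝ)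
    (hric : ∀ t < ε, ((t ^ 2 - t) / (lam - 1)) * deriv w t
      = (w t) ^ 2 - 2 * t * w t + t)
    (t : ℝ) (ht : t < 0) :
    deriv w t = (lam - 1) * ((w t) ^ 2 - 2 * t * w t + t) / (t ^ 2 - t) := by
  have h := hric t (ht.trans hε)
  have h1 : (0:ℝ) < t ^ 2 - t := by nlinarith
  have h2 : lam - 1 ≠ 0 := sub_ne_zero.mpr hlam
  have h3 : t ≠ 0 := ht.ne
  have h4 : t - 1 ≠ 0 := (by linarith : t - 1 < 0).ne
  field_simp at h ⊢
  linear_combination h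

/-- Case `1 < lam`: `w` is positive on `(-∞, 0)`. -/
private lemma riccati_case_pos (lam : ℝ) (hlam1 : 1 < lam)
    (ε : ℝ) (hε : 0 < ε) (w : ℝ → ℝ)
    (hw : ∀ t < ε, DifferentiableAt ℝ w t)
    (hw0 : w 0 = 0)
    (hric : ∀ t < ε, ((t ^ 2 - t) / (lam - 1)) * deriv w t
      = (w t) ^ 2 - 2 * t * w t + t) :
    ∀ t < (0 : ℝ), 0 < w t := by
  have hlam : lam ≠ 1 := ne_of_gt hlam1
  have hlam0 : 0 < lam - 1 := by linarith
  obtain ⟨δ, hδ, hQ⟩ := riccati_qneg ε hε w hw hw0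
  have hcont : ContinuousOn w (Iic 0) := fun x hx =>
    ((hw x (lt_of_le_of_lt hx hε)).continuousAt).continuousWithinAt
  have hdf := riccati_deriv_formula lam hlam ε hε w hric
  -- derivative is negative where Q < 0
  have hderivneg : ∀ x, -δ < x → x < 0 → deriv w x < 0 := by
    intro x hx1 hx2
    rw [hdf x hx2]
    apply div_neg_of_neg_of_pos
    · exact mul_neg_of_pos_of_neg hlam0 (hQ x hx1 hx2)
    · nlinarith
  -- w is positive on (-δ, 0)
  have hnear : ∀ t, -δ < t → t < 0 → 0 < w t := by
    intro t ht1 ht2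
    have hanti : StrictAntiOn w (Icc t 0) := by
      apply strictAntiOn_of_deriv_neg (convex_Icc _ _)
        (hcont.mono (fun x hx => hx.2))
      intro x hx
      rw [interior_Icc] at hx
      exact hderivneg x (ht1.trans hx.1) hx.2
    have htm : t ∈ Icc t 0 := ⟨le_refl _, ht2.le⟩
    have h0m : (0:ℝ) ∈ Icc t 0 := ⟨ht2.le, le_refl _⟩
    have := hanti htm h0m ht2
    rwa [hw0] at this
  -- derivative at a zero is negative
  have hzero_deriv : ∀ t0, t0 < 0 → w t0 = 0 → deriv w t0 < 0 := by
    intro t0 ht0 hz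
    rw [hdf t0 ht0, hz]
    apply div_neg_of_neg_of_pos
    · nlinarith
    · nlinarith
  -- no zero on (-∞, 0)
  have hnozero : ∀ t0, t0 < 0 → w t0 ≠ 0 := by
    intro t0 ht0 hwt0
    have hd0 : deriv w t0 < 0 := hzero_deriv t0 ht0 hwt0
    have hdA : HasDerivAt w (deriv w t0) t0 := (hw t0 (ht0.trans hε)).hasDerivAt
    have hs := hasDerivAt_iff_tendsto_slope.mp hdA
    have hev : ∀ᶠ x in 𝓝[≠] t0, slope w t0 x < 0 := hs.eventually_lt_const hd0
    have hev' : ∀ᶠ x in 𝓝[>] t0, slope w t0 x < 0 :=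
      hev.filter_mono (nhdsWithin_mono _ (fun x hx => ne_of_gt hx))
    have hmem : Ioo t0 0 ∈ 𝓝[>] t0 := Ioo_mem_nhdsGT_of_mem ⟨le_refl _, ht0⟩
    obtain ⟨t1, ht1s, ht1m⟩ := (hev'.and (eventually_of_mem hmem (fun x hx => hx))).exists
    have hwt1 : w t1 < 0 := by
      rw [slope_def_field, hwt0, sub_zero] at ht1s
      have ht1pos : 0 < t1 - t0 := by linarith [ht1m.1]
      rcases div_neg_iff.mp ht1s with ⟨h1, h2⟩ | ⟨h1, h2⟩ <;> linarith
    -- pick b with t1 < b < 0, -δ < b, w b > 0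
    set b := max (t1/2) (-δ/2) with hbdef
    have hbneg : b < 0 := max_lt (by linarith [ht1m.2]) (by linarith)
    have ht1b : t1 < b := lt_of_lt_of_le (by linarith [ht1m.2]) (le_max_left _ _)
    have hbδ : -δ < b := lt_of_lt_of_le (by linarith) (le_max_right _ _)
    have hwb : 0 < w b := hnear b hbδ hbneg
    have hconts : ContinuousOn w (Icc t1 b) :=
      hcont.mono (fun x hx => le_trans hx.2 hbneg.le)
    have hIVT : (0:ℝ) ∈ w '' Icc t1 b :=
      intermediate_value_Icc ht1b.le hconts ⟨hwt1.le, hwb.le⟩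
    obtain ⟨c, hc, hc0⟩ := hIVT
    set S := Icc t1 b ∩ w ⁻¹' {0} with hSdef
    have hSne : S.Nonempty := ⟨c, hc, by simp [hc0]⟩
    have hScl : IsClosed S :=
      hconts.preimage_isClosed_of_isClosed isClosed_Icc isClosed_singleton
    have hSbdd : BddBelow S := (bddBelow_Icc).mono inter_subset_left
    set b' := sInf S with hb'def
    have hb'S : b' ∈ S := hScl.csInf_mem hSne hSbdd
    have hb'w : w b' = 0 := hb'S.2
    have hb'mem : b' ∈ Icc t1 b := hb'S.1
    have ht1b' : t1 < b' := by
      rcases lt_or_eq_of_le hb'mem.1 with h | h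
      · exact h
      · exfalso; rw [←h] at hb'w; exact absurd hb'w hwt1.ne
    have hb'neg : b' < 0 := lt_of_le_of_lt hb'mem.2 hbneg
    have hwneg : ∀ x, t1 ≤ x → x < b' → w x < 0 := by
      intro x hx1 hx2
      by_contra hge
      push_neg at hge
      have hxb : x ≤ b := le_trans hx2.le hb'mem.2
      have hxne : w x ≠ 0 := by
        intro h
        have : b' ≤ x := csInf_le hSbdd ⟨⟨hx1, hxb⟩, by simp [h]⟩
        linarith
      have hpos : 0 < w x := lt_of_le_of_ne hge (Ne.symm hxne)
      have : (0:ℝ) ∈ w '' Icc t1 x :=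
        intermediate_value_Icc hx1 (hconts.mono (Icc_subset_Icc le_rfl hxb)) ⟨hwt1.le, hpos.le⟩
      obtain ⟨y, hy, hy0⟩ := this
      have hyS : b' ≤ y := csInf_le hSbdd ⟨⟨hy.1, le_trans hy.2 hxb⟩, by simp [hy0]⟩
      linarith [hy.2]
    have hd0' : deriv w b' < 0 := hzero_deriv b' hb'neg hb'w
    have hdA' : HasDerivAt w (deriv w b') b' := (hw b' (hb'neg.trans hε)).hasDerivAt
    have hs' := hasDerivAt_iff_tendsto_slope.mp hdA'
    have hev2 : ∀ᶠ x in 𝓝[≠] b', slope w b' x < 0 := hs'.eventually_lt_const hd0'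
    have hev2' : ∀ᶠ x in 𝓝[<] b', slope w b' x < 0 :=
      hev2.filter_mono (nhdsWithin_mono _ (fun x hx => ne_of_lt hx))
    have hmem2 : Ioo t1 b' ∈ 𝓝[<] b' := Ioo_mem_nhdsLT_of_mem ⟨ht1b', le_refl _⟩
    obtain ⟨x, hxs, hxm⟩ := (hev2'.and (eventually_of_mem hmem2 (fun x hx => hx))).exists
    rw [slope_def_field, hb'w, sub_zero] at hxs
    have hxlt : x - b' < 0 := by linarith [hxm.2]
    have hwx_pos : 0 < w x := by
      rcases div_neg_iff.mp hxs with ⟨h1, h2⟩ | ⟨h1, h2⟩ <;> linarith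
    exact absurd (hwneg x hxm.1.le hxm.2) (not_lt.mpr hwx_pos.le)
  -- conclude
  intro t ht
  rcases lt_trichotomy (w t) 0 with hneg | hzero | hpos
  · exfalso
    set b := max (t/2) (-δ/2) with hbdef
    have hbneg : b < 0 := max_lt (by linarith) (by linarith)
    have htb : t < b := lt_of_lt_of_le (by linarith) (le_max_left _ _)
    have hbδ : -δ < b := lt_of_lt_of_le (by linarith) (le_max_right _ _)
    have hwb : 0 < w b := hnear b hbδ hbneg
    have hconts : ContinuousOn w (Icc t b) :=
      hcont.mono (fun x hx => le_trans hx.2 hbneg.le)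
    have : (0:ℝ) ∈ w '' Icc t b :=
      intermediate_value_Icc htb.le hconts ⟨hneg.le, hwb.le⟩
    obtain ⟨c, hc, hc0⟩ := this
    exact hnozero c (lt_of_le_of_lt hc.2 hbneg) hc0
  · exact absurd hzero (hnozero t ht)
  · exact hpos

/-- Case `lam < 1`: `w` is negative on `(-∞, 0)`. -/
private lemma riccati_case_neg (lam : ℝ) (hlam1 : lam < 1)
    (ε : ℝ) (hε : 0 < ε) (w : ℝ → ℝ)
    (hw : ∀ t < ε, DifferentiableAt ℝ w t)
    (hw0 : w 0 = 0)
    (hric : ∀ t < ε, ((t ^ 2 - t) / (lam - 1)) * deriv w t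
      = (w t) ^ 2 - 2 * t * w t + t) :
    ∀ t < (0 : ℝ), w t < 0 := by
  have hlam : lam ≠ 1 := ne_of_lt hlam1
  have hlam0 : lam - 1 < 0 := by linarith
  obtain ⟨δ, hδ, hQ⟩ := riccati_qneg ε hε w hw hw0
  have hcont : ContinuousOn w (Iic 0) := fun x hx =>
    ((hw x (lt_of_le_of_lt hx hε)).continuousAt).continuousWithinAt
  have hdf := riccati_deriv_formula lam hlam ε hε w hric
  have hderivpos : ∀ x, -δ < x → x < 0 → 0 < deriv w x := by
    intro x hx1 hx2
    rw [hdf x hx2]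
    apply div_pos
    · exact mul_pos_of_neg_of_neg hlam0 (hQ x hx1 hx2)
    · nlinarith
  have hnear : ∀ t, -δ < t → t < 0 → w t < 0 := by
    intro t ht1 ht2
    have hmono : StrictMonoOn w (Icc t 0) := by
      apply strictMonoOn_of_deriv_pos (convex_Icc _ _)
        (hcont.mono (fun x hx => hx.2))
      intro x hx
      rw [interior_Icc] at hx
      exact hderivpos x (ht1.trans hx.1) hx.2
    have htm : t ∈ Icc t 0 := ⟨le_refl _, ht2.le⟩
    have h0m : (0:ℝ) ∈ Icc t 0 := ⟨ht2.le, le_refl _⟩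
    have := hmono htm h0m ht2
    rwa [hw0] at this
  have hzero_deriv : ∀ t0, t0 < 0 → w t0 = 0 → 0 < deriv w t0 := by
    intro t0 ht0 hz
    rw [hdf t0 ht0, hz]
    apply div_pos
    · nlinarith
    · nlinarith
  have hnozero : ∀ t0, t0 < 0 → w t0 ≠ 0 := by
    intro t0 ht0 hwt0
    have hd0 : 0 < deriv w t0 := hzero_deriv t0 ht0 hwt0
    have hdA : HasDerivAt w (deriv w t0) t0 := (hw t0 (ht0.trans hε)).hasDerivAt
    have hs := hasDerivAt_iff_tendsto_slope.mp hdA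
    have hev : ∀ᶠ x in 𝓝[≠] t0, 0 < slope w t0 x := hs.eventually_const_lt hd0
    have hev' : ∀ᶠ x in 𝓝[>] t0, 0 < slope w t0 x :=
      hev.filter_mono (nhdsWithin_mono _ (fun x hx => ne_of_gt hx))
    have hmem : Ioo t0 0 ∈ 𝓝[>] t0 := Ioo_mem_nhdsGT_of_mem ⟨le_refl _, ht0⟩
    obtain ⟨t1, ht1s, ht1m⟩ := (hev'.and (eventually_of_mem hmem (fun x hx => hx))).exists
    have hwt1 : 0 < w t1 := by
      rw [slope_def_field, hwt0, sub_zero] at ht1s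
      have ht1pos : 0 < t1 - t0 := by linarith [ht1m.1]
      rcases div_pos_iff.mp ht1s with ⟨h1, h2⟩ | ⟨h1, h2⟩ <;> linarith
    set b := max (t1/2) (-δ/2) with hbdef
    have hbneg : b < 0 := max_lt (by linarith [ht1m.2]) (by linarith)
    have ht1b : t1 < b := lt_of_lt_of_le (by linarith [ht1m.2]) (le_max_left _ _)
    have hbδ : -δ < b := lt_of_lt_of_le (by linarith) (le_max_right _ _)
    have hwb : w b < 0 := hnear b hbδ hbneg
    have hconts : ContinuousOn w (Icc t1 b) :=
      hcont.mono (fun x hx => le_trans hx.2 hbneg.le)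
    have hIVT : (0:ℝ) ∈ w '' Icc t1 b := by
      have := intermediate_value_Icc' ht1b.le hconts
      exact this ⟨hwb.le, hwt1.le⟩
    obtain ⟨c, hc, hc0⟩ := hIVT
    set S := Icc t1 b ∩ w ⁻¹' {0} with hSdef
    have hSne : S.Nonempty := ⟨c, hc, by simp [hc0]⟩
    have hScl : IsClosed S :=
      hconts.preimage_isClosed_of_isClosed isClosed_Icc isClosed_singleton
    have hSbdd : BddBelow S := (bddBelow_Icc).mono inter_subset_left
    set b' := sInf S with hb'def
    have hb'S : b' ∈ S := hScl.csInf_mem hSne hSbdd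
    have hb'w : w b' = 0 := hb'S.2
    have hb'mem : b' ∈ Icc t1 b := hb'S.1
    have ht1b' : t1 < b' := by
      rcases lt_or_eq_of_le hb'mem.1 with h | h
      · exact h
      · exfalso; rw [←h] at hb'w; exact absurd hb'w hwt1.ne'
    have hb'neg : b' < 0 := lt_of_le_of_lt hb'mem.2 hbneg
    have hwpos : ∀ x, t1 ≤ x → x < b' → 0 < w x := by
      intro x hx1 hx2
      by_contra hge
      push_neg at hge
      have hxb : x ≤ b := le_trans hx2.le hb'mem.2
      have hxne : w x ≠ 0 := by
        intro h
        have : b' ≤ x := csInf_le hSbdd ⟨⟨hx1, hxb⟩, by simp [h]⟩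
        linarith
      have hneg' : w x < 0 := lt_of_le_of_ne hge hxne
      have : (0:ℝ) ∈ w '' Icc t1 x := by
        have := intermediate_value_Icc' hx1 (hconts.mono (Icc_subset_Icc le_rfl hxb))
        exact this ⟨hneg'.le, hwt1.le⟩
      obtain ⟨y, hy, hy0⟩ := this
      have hyS : b' ≤ y := csInf_le hSbdd ⟨⟨hy.1, le_trans hy.2 hxb⟩, by simp [hy0]⟩
      linarith [hy.2]
    have hd0' : 0 < deriv w b' := hzero_deriv b' hb'neg hb'w
    have hdA' : HasDerivAt w (deriv w b') b' := (hw b' (hb'neg.trans hε)).hasDerivAt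
    have hs' := hasDerivAt_iff_tendsto_slope.mp hdA'
    have hev2 : ∀ᶠ x in 𝓝[≠] b', 0 < slope w b' x := hs'.eventually_const_lt hd0'
    have hev2' : ∀ᶠ x in 𝓝[<] b', 0 < slope w b' x :=
      hev2.filter_mono (nhdsWithin_mono _ (fun x hx => ne_of_lt hx))
    have hmem2 : Ioo t1 b' ∈ 𝓝[<] b' := Ioo_mem_nhdsLT_of_mem ⟨ht1b', le_refl _⟩
    obtain ⟨x, hxs, hxm⟩ := (hev2'.and (eventually_of_mem hmem2 (fun x hx => hx))).exists
    rw [slope_def_field, hb'w, sub_zero] at hxs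
    have hxlt : x - b' < 0 := by linarith [hxm.2]
    have hwx_neg : w x < 0 := by
      rcases div_pos_iff.mp hxs with ⟨h1, h2⟩ | ⟨h1, h2⟩ <;> linarith
    exact absurd (hwpos x hxm.1.le hxm.2) (not_lt.mpr hwx_neg.le)
  intro t ht
  rcases lt_trichotomy (w t) 0 with hneg | hzero | hpos
  · exact hneg
  · exact absurd hzero (hnozero t ht)
  · exfalso
    set b := max (t/2) (-δ/2) with hbdef
    have hbneg : b < 0 := max_lt (by linarith) (by linarith)
    have htb : t < b := lt_of_lt_of_le (by linarith) (le_max_left _ _)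
    have hbδ : -δ < b := lt_of_lt_of_le (by linarith) (le_max_right _ _)
    have hwb : w b < 0 := hnear b hbδ hbneg
    have hconts : ContinuousOn w (Icc t b) :=
      hcont.mono (fun x hx => le_trans hx.2 hbneg.le)
    have : (0:ℝ) ∈ w '' Icc t b := by
      have := intermediate_value_Icc' htb.le hconts
      exact this ⟨hwb.le, hpos.le⟩
    obtain ⟨c, hc, hc0⟩ := this
    exact hnozero c (lt_of_le_of_lt hc.2 hbneg) hc0

theorem riccati_constant_sign (lam : ℝ) (hlam : lam ≠ 1)
    (ε : ℝ) (hε : 0 < ε) (w : ℝ → ℝ)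
    (hw : ∀ t < ε, DifferentiableAt ℝ w t)
    (hw0 : w 0 = 0)
    (hric : ∀ t < ε, ((t ^ 2 - t) / (lam - 1)) * deriv w t
      = (w t) ^ 2 - 2 * t * w t + t) :
    (∀ t < (0 : ℝ), 0 < w t) ∨ (∀ t < (0 : ℝ), w t < 0) := by
  rcases lt_or_gt_of_ne hlam with h | h
  · exact Or.inr (riccati_case_neg lam h ε hε w hw hw0 hric)
  · exact Or.inl (riccati_case_pos lam h ε hε w hw hw0 hric)
end
end

section
/- For h > 0 let Ω(h) = {(x, y) ∈ ℝ² : x² + y² + x²y² < h} (a bounded open set), and define J₁(h) = ∬_{Ω(h)} 1 dx dy and J₂(h) = ∬_{Ω(h)} x² dx dy. Then J₁ and J₂ are differentiable on (0, ∞) and satisfy, for all h > 0, the Picard–Fuchs system J₁(h) = 2h·J₁′(h) − 2·J₂′(h) and J₂(h) = −(2h/3)·J₁′(h) + (2h/3 + 4/3)·J₂′(h). -/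
open MeasureTheory

noncomputable section

/-- The region bounded by the oval `{x² + y² + x²y² = h}`. -/
def Omeg (h : ℝ) : Set (ℝ × ℝ) := {p | p.1 ^ 2 + p.2 ^ 2 + p.1 ^ 2 * p.2 ^ 2 < h}

/-- The area integral `J₁(h) = ∬_{Ω(h)} 1 dx dy`. -/
def J₁ : ℝ → ℝ := fun h => ∫ _p in Omeg h, (1 : ℝ)

/-- The integral `J₂(h) = ∬_{Ω(h)} x² dx dy`. -/
def J₂ : ℝ → ℝ := fun h => ∫ p in Omeg h, p.1 ^ 2

open Real Set intervalIntegral Filter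

namespace PF6

def phi (h t : ℝ) : ℝ := Real.sqrt (1 - t^2) / Real.sqrt (1 + h*t^2)

def dphi (h t : ℝ) : ℝ :=
  -(Real.sqrt (1 - t^2) * t^2 / (2 * Real.sqrt (1 + h*t^2) * (1 + h*t^2)))

def G (h : ℝ) : ℝ := ∫ t in (-1:ℝ)..1, phi h t
def K (h : ℝ) : ℝ := ∫ t in (-1:ℝ)..1, t^2 * phi h t
def Gd (h : ℝ) : ℝ := ∫ t in (-1:ℝ)..1, dphi h t
def Kd (h : ℝ) : ℝ := ∫ t in (-1:ℝ)..1, t^2 * dphi h t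

lemma hasDerivAt_phi (t : ℝ) {h : ℝ} (hQ : 0 < 1 + h*t^2) :
    HasDerivAt (fun x => phi x t) (dphi h t) h := by
  have hs : Real.sqrt (1 + h*t^2) ≠ 0 := ne_of_gt (Real.sqrt_pos.2 hQ)
  have h1 : HasDerivAt (fun x : ℝ => 1 + x*t^2) (t^2) h := by
    simpa using ((hasDerivAt_id h).mul_const (t^2)).const_add 1
  have h2 : HasDerivAt (fun x => Real.sqrt (1 + x*t^2))
      (1 / (2 * Real.sqrt (1 + h*t^2)) * t^2) h :=
    (Real.hasDerivAt_sqrt (ne_of_gt hQ)).comp h h1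
  have h3 := (h2.inv hs).const_mul (Real.sqrt (1 - t^2))
  have : (fun y => Real.sqrt (1 - t^2) * (fun x => Real.sqrt (1 + x*t^2))⁻¹ y)
      = fun x => phi x t := by
    funext x; simp [phi, div_eq_mul_inv]
  rw [this] at h3
  refine h3.congr_deriv (Eq.symm ?_)
  rw [dphi]
  have hsq : Real.sqrt (1 + h*t^2) ^ 2 = 1 + h*t^2 := Real.sq_sqrt hQ.le
  field_simp
  congr 2
  rw [mul_comm (t^2) h, pow_succ (Real.sqrt (1 + h*t^2)) 2, hsq]

lemma continuous_phi (h : ℝ) (hh : 0 ≤ h) : Continuous (fun t => phi h t) := by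
  apply Continuous.div
  · exact Real.continuous_sqrt.comp (by continuity)
  · exact Real.continuous_sqrt.comp (by continuity)
  · intro t
    have : (0:ℝ) < 1 + h*t^2 := by positivity
    exact ne_of_gt (Real.sqrt_pos.2 this)

lemma continuous_dphi (h : ℝ) (hh : 0 ≤ h) : Continuous (fun t => dphi h t) := by
  apply Continuous.neg
  apply Continuous.div
  · exact (Real.continuous_sqrt.comp (by continuity)).mul (by continuity)
  · exact ((continuous_const).mul (Real.continuous_sqrt.comp (by continuity))).mul (by continuity)
  · intro t
    have h1 : (0:ℝ) < 1 + h*t^2 := by positivity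
    have h2 : (0:ℝ) < Real.sqrt (1 + h*t^2) := Real.sqrt_pos.2 h1
    positivity

lemma hasDerivAt_wint (w : ℝ → ℝ) (hw : Continuous w)
    (hwb : ∀ t, t ∈ Set.uIoc (-1:ℝ) 1 → |w t| ≤ 1) {h : ℝ} (hh : 0 < h) :
    HasDerivAt (fun x => ∫ t in (-1:ℝ)..1, w t * phi x t)
      (∫ t in (-1:ℝ)..1, w t * dphi h t) h := by
  have key := intervalIntegral.hasDerivAt_integral_of_dominated_loc_of_deriv_le
    (F := fun x t => w t * phi x t) (F' := fun x t => w t * dphi x t)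
    (x₀ := h) (a := (-1:ℝ)) (b := 1) (bound := fun _ => (1:ℝ)) (μ := volume)
    (s := Metric.ball h (h/2)) (Metric.ball_mem_nhds h (half_pos hh)) ?_ ?_ ?_ ?_ ?_ ?_
  · exact key.2
  · filter_upwards [eventually_gt_nhds hh] with x hx
    exact ((hw.mul (continuous_phi x hx.le)).aestronglyMeasurable).restrict
  · exact (hw.mul (continuous_phi h hh.le)).intervalIntegrable _ _
  · exact ((hw.mul (continuous_dphi h hh.le)).aestronglyMeasurable).restrict
  · filter_upwards with t ht x hx
    have hx0 : 0 < x := by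
      have := abs_lt.1 (Metric.mem_ball.1 hx)
      linarith [this.1]
    have ht1 : t^2 ≤ 1 := by
      rcases Set.mem_uIoc.1 ht with h' | h' <;> nlinarith [h'.1, h'.2]
    have hQ1 : (1:ℝ) ≤ 1 + x*t^2 := by nlinarith
    have hsQ : (1:ℝ) ≤ Real.sqrt (1 + x*t^2) := by
      have := Real.sqrt_le_sqrt hQ1
      rwa [Real.sqrt_one] at this
    have hS : Real.sqrt (1 - t^2) ≤ 1 := Real.sqrt_le_one.2 (by nlinarith [sq_nonneg t])
    have hS0 : 0 ≤ Real.sqrt (1 - t^2) := Real.sqrt_nonneg _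
    have hd : |dphi x t| ≤ 1 := by
      rw [dphi, abs_neg, abs_div]
      have hnum : |Real.sqrt (1 - t^2) * t^2| ≤ 1 := by
        rw [abs_of_nonneg (by positivity)]
        nlinarith
      rw [div_le_one (by positivity)]
      refine hnum.trans ?_
      rw [abs_of_pos (by positivity)]
      nlinarith
    calc ‖w t * dphi x t‖ = |w t| * |dphi x t| := abs_mul _ _
      _ ≤ 1 * 1 := mul_le_mul (hwb t ht) hd (abs_nonneg _) zero_le_one
      _ = 1 := by norm_num
  · exact intervalIntegrable_const
  · filter_upwards with t ht x hx
    have hx0 : 0 < x := by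
      have := abs_lt.1 (Metric.mem_ball.1 hx)
      linarith [this.1]
    have hQ : (0:ℝ) < 1 + x*t^2 := by positivity
    exact (hasDerivAt_phi t hQ).const_mul (w t)

lemma hasDerivAt_G {h : ℝ} (hh : 0 < h) : HasDerivAt G (Gd h) h := by
  have := hasDerivAt_wint (fun _ => 1) continuous_const (fun t _ => by norm_num) hh
  simp only [one_mul] at this
  exact this

lemma hasDerivAt_K {h : ℝ} (hh : 0 < h) : HasDerivAt K (Kd h) h := by
  have := hasDerivAt_wint (fun t => t^2) (by continuity)
    (fun t ht => by
      rcases Set.mem_uIoc.1 ht with h' | h'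
      · rw [abs_of_nonneg (sq_nonneg t)]; nlinarith [h'.1, h'.2]
      · rw [abs_of_nonneg (sq_nonneg t)]; nlinarith [h'.1, h'.2]) hh
  exact this

lemma key_integral (h : ℝ) (hh : 0 < h) :
    ∫ t in (-1:ℝ)..1,
      (1 - 4*t^2 - 3*h*t^4) * Real.sqrt (1-t^2) / ((1+h*t^2) * Real.sqrt (1+h*t^2)) = 0 := by
  have hQ : ∀ t:ℝ, (0:ℝ) < 1 + h*t^2 := fun t => by positivity
  have hQs : ∀ t:ℝ, (0:ℝ) < Real.sqrt (1 + h*t^2) := fun t => Real.sqrt_pos.2 (hQ t)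
  have hcont' : Continuous (fun t =>
      (1 - 4*t^2 - 3*h*t^4) * Real.sqrt (1-t^2) / ((1+h*t^2) * Real.sqrt (1+h*t^2))) := by
    apply Continuous.div
    · exact (by continuity : Continuous fun t:ℝ => 1 - 4*t^2 - 3*h*t^4).mul
        (Real.continuous_sqrt.comp (by continuity))
    · exact (by continuity : Continuous fun t:ℝ => 1 + h*t^2).mul
        (Real.continuous_sqrt.comp (by continuity))
    · intro t; positivity
  have hcontf : Continuous (fun t => t * (1 - t^2) * Real.sqrt (1-t^2) / Real.sqrt (1+h*t^2)) := by
    apply Continuous.div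
    · exact (by continuity : Continuous fun t:ℝ => t * (1-t^2)).mul
        (Real.continuous_sqrt.comp (by continuity))
    · exact Real.continuous_sqrt.comp (by continuity)
    · intro t; exact (hQs t).ne'
  have hderiv : ∀ t ∈ Set.Ioo (-1:ℝ) 1,
      HasDerivAt (fun t => t * (1 - t^2) * Real.sqrt (1-t^2) / Real.sqrt (1+h*t^2))
        ((1 - 4*t^2 - 3*h*t^4) * Real.sqrt (1-t^2) / ((1+h*t^2) * Real.sqrt (1+h*t^2))) t := by
    intro t ht
    have ht1 : (0:ℝ) < 1 - t^2 := by nlinarith [ht.1, ht.2]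
    have hS : (0:ℝ) < Real.sqrt (1 - t^2) := Real.sqrt_pos.2 ht1
    have h1 : HasDerivAt (fun t:ℝ => 1 - t^2) (-(2*t)) t := by
      simpa using ((hasDerivAt_pow 2 t).const_sub 1)
    have hu : HasDerivAt (fun t:ℝ => t*(1 - t^2)) (1*(1-t^2) + t*(-(2*t))) t :=
      (hasDerivAt_id t).mul h1
    have hsq : HasDerivAt (fun t => Real.sqrt (1-t^2))
        (1/(2*Real.sqrt (1-t^2)) * (-(2*t))) t :=
      (Real.hasDerivAt_sqrt (ne_of_gt ht1)).comp t h1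
    have h2 : HasDerivAt (fun t:ℝ => 1 + h*t^2) (h*(2*t)) t := by
      have := ((hasDerivAt_pow 2 t).const_mul h).const_add 1
      simpa [mul_comm, mul_assoc] using this
    have hQd : HasDerivAt (fun t => Real.sqrt (1+h*t^2))
        (1/(2*Real.sqrt (1+h*t^2)) * (h*(2*t))) t :=
      (Real.hasDerivAt_sqrt (ne_of_gt (hQ t))).comp t h2
    have := (hu.mul hsq).div hQd (hQs t).ne'
    refine this.congr_deriv (Eq.symm ?_)
    simp only [Pi.mul_apply]
    have ha2 : Real.sqrt (1-t^2) ^ 2 = 1 - t^2 := Real.sq_sqrt ht1.le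
    have hb2 : Real.sqrt (1+h*t^2) ^ 2 = 1 + h*t^2 := Real.sq_sqrt (hQ t).le
    set a := Real.sqrt (1-t^2) with hA
    set b := Real.sqrt (1+h*t^2) with hB
    have hb0 : b ≠ 0 := (hQs t).ne'
    field_simp
    linear_combination (((1-4*t^2-3*h*t^4) - (1+t^2*h)*(1-3*t^2))*b^2 + (1+t^2*h)*t^2*h*(1-t^2)) * ha2
      + (((1-4*t^2-3*h*t^4) - (1+t^2*h)*(1-3*t^2))*(1-t^2) + (1+t^2*h)*t^2*(1-t^2)) * hb2
  have := intervalIntegral.integral_eq_sub_of_hasDeriv_right_of_le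
    (by norm_num : (-1:ℝ) ≤ 1) hcontf.continuousOn
    (fun t ht => (hderiv t ht).hasDerivWithinAt)
    ((hcont'.intervalIntegrable _ _))
  rw [this]
  norm_num

def sfun (h x : ℝ) : ℝ := Real.sqrt ((h - x^2)/(1+x^2))

lemma sfun_nonneg (h x : ℝ) : 0 ≤ sfun h x := Real.sqrt_nonneg _

lemma slice_mem (h x y : ℝ) : (x, y) ∈ Omeg h ↔ y ∈ Ioo (-(sfun h x)) (sfun h x) := by
  have h1 : (0:ℝ) < 1 + x^2 := by positivity
  have e1 : (x, y) ∈ Omeg h ↔ y^2 < (h - x^2)/(1+x^2) := by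
    rw [Omeg, mem_setOf_eq, lt_div_iff₀ h1]
    constructor <;> intro <;> nlinarith
  rw [e1, mem_Ioo, ← abs_lt, ← sq_abs, sfun, ← Real.lt_sqrt (abs_nonneg y)]

lemma omeg_open (h : ℝ) : IsOpen (Omeg h) :=
  isOpen_lt (by continuity) continuous_const

lemma omeg_subset (h : ℝ) :
    Omeg h ⊆ Icc (-(Real.sqrt h)) (Real.sqrt h) ×ˢ Icc (-(Real.sqrt h)) (Real.sqrt h) := by
  rintro ⟨x, y⟩ hp
  have hp' : x^2 + y^2 + x^2*y^2 < h := hp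
  have hx : x^2 ≤ h := by nlinarith [sq_nonneg y, sq_nonneg (x*y)]
  have hy : y^2 ≤ h := by nlinarith [sq_nonneg x, sq_nonneg (x*y)]
  constructor <;> · rw [mem_Icc, ← abs_le]; exact Real.abs_le_sqrt (by assumption)

lemma omeg_vol (h : ℝ) : volume (Omeg h) ≠ ⊤ := by
  apply ne_of_lt
  calc volume (Omeg h) ≤ volume (Icc (-(Real.sqrt h)) (Real.sqrt h) ×ˢ
      Icc (-(Real.sqrt h)) (Real.sqrt h)) := measure_mono (omeg_subset h)
    _ < ⊤ := by
      rw [show (volume : Measure (ℝ × ℝ)) = (volume : Measure ℝ).prod volume from rfl,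
        Measure.prod_prod]
      exact ENNReal.mul_lt_top (by simp) (by simp)

lemma integrableOn_omeg (h : ℝ) (f : ℝ → ℝ) (hf : Continuous f) :
    IntegrableOn (fun p : ℝ × ℝ => f p.1) (Omeg h) := by
  obtain ⟨C, hC⟩ := (isCompact_Icc (a := -(Real.sqrt h)) (b := Real.sqrt h)).exists_bound_of_continuousOn
    hf.continuousOn
  apply Measure.integrableOn_of_bounded (omeg_vol h)
    ((hf.comp continuous_fst).aestronglyMeasurable)
  rw [ae_restrict_iff' (omeg_open h).measurableSet]
  filter_upwards with p hp
  exact hC p.1 ((omeg_subset h hp).1)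

lemma setIntegral_slice (h : ℝ) (hh : 0 < h) (f : ℝ → ℝ) (hf : Continuous f) :
    ∫ p in Omeg h, f p.1 =
      ∫ x in (-(Real.sqrt h))..(Real.sqrt h), f x * (2 * sfun h x) := by
  have hmeas := (omeg_open h).measurableSet
  rw [← MeasureTheory.integral_indicator hmeas]
  rw [show (volume : Measure (ℝ × ℝ)) = (volume : Measure ℝ).prod volume from rfl]
  rw [MeasureTheory.integral_prod _
    (((integrableOn_omeg h f hf).integrable_indicator hmeas))]
  have inner : ∀ x : ℝ,
      (∫ y, Set.indicator (Omeg h) (fun p : ℝ × ℝ => f p.1) (x, y)) = f x * (2 * sfun h x) := by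
    intro x
    have : (fun y => Set.indicator (Omeg h) (fun p : ℝ × ℝ => f p.1) (x, y))
        = Set.indicator (Ioo (-(sfun h x)) (sfun h x)) (fun _ => f x) := by
      funext y
      classical
      rw [Set.indicator_apply]
      simp only [slice_mem h x y]
      rw [Set.indicator_apply]
    rw [this, MeasureTheory.integral_indicator measurableSet_Ioo, setIntegral_const,
      Measure.real, Real.volume_Ioo, smul_eq_mul]
    rw [ENNReal.toReal_ofReal (by linarith [sfun_nonneg h x])]
    ring
  simp_rw [inner]
  rw [← MeasureTheory.setIntegral_eq_integral_of_forall_compl_eq_zero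
    (s := Ioc (-(Real.sqrt h)) (Real.sqrt h)) ?_]
  · rw [intervalIntegral.integral_of_le
      (by linarith [Real.sqrt_nonneg h] : -(Real.sqrt h) ≤ Real.sqrt h)]
  · intro x hx
    have hx2 : h ≤ x^2 := by
      rw [Set.mem_Ioc, not_and_or, not_lt, not_le] at hx
      have hsq : Real.sqrt h ^ 2 = h := Real.sq_sqrt hh.le
      rcases hx with h' | h'
      · nlinarith [Real.sqrt_nonneg h]
      · nlinarith [Real.sqrt_nonneg h]
    have hs0 : sfun h x = 0 := by
      rw [sfun, Real.sqrt_eq_zero']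
      apply div_nonpos_of_nonpos_of_nonneg <;> [linarith; positivity]
    rw [hs0]; ring

lemma sfun_scaled {h t : ℝ} (hh : 0 < h) (ht : t ∈ Set.uIcc (-1:ℝ) 1) :
    sfun h (Real.sqrt h * t) = Real.sqrt h * phi h t := by
  rw [Set.uIcc_of_le (by norm_num : (-1:ℝ) ≤ 1), Set.mem_Icc] at ht
  have ht1 : (0:ℝ) ≤ 1 - t^2 := by nlinarith [ht.1, ht.2]
  have hQ : (0:ℝ) < 1 + h*t^2 := by positivity
  have harg : (h - (Real.sqrt h * t)^2)/(1+(Real.sqrt h * t)^2)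
      = h * ((1-t^2)/(1+h*t^2)) := by
    rw [mul_pow, Real.sq_sqrt hh.le]
    field_simp
  rw [sfun, harg, Real.sqrt_mul hh.le, phi, Real.sqrt_div ht1]

lemma J1_eq {h : ℝ} (hh : 0 < h) : J₁ h = 2*h*G h := by
  have e1 := setIntegral_slice h hh (fun _ => 1) continuous_const
  simp only [one_mul] at e1
  rw [J₁]
  simp only [e1]
  have hsub := intervalIntegral.smul_integral_comp_mul_left
    (a := (-1:ℝ)) (b := 1) (f := fun x => 2 * sfun h x) (Real.sqrt h)
  rw [show Real.sqrt h * (-1) = -Real.sqrt h by ring, mul_one] at hsub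
  rw [← hsub, smul_eq_mul]
  have e2 : ∫ t in (-1:ℝ)..1, 2 * sfun h (Real.sqrt h * t)
      = ∫ t in (-1:ℝ)..1, (2*Real.sqrt h) * phi h t := by
    apply intervalIntegral.integral_congr
    intro t ht
    show 2 * sfun h (Real.sqrt h * t) = 2 * Real.sqrt h * phi h t
    rw [sfun_scaled hh ht]; ring
  rw [e2, intervalIntegral.integral_const_mul]
  have hs : Real.sqrt h * Real.sqrt h = h := Real.mul_self_sqrt hh.le
  rw [show G h = ∫ t in (-1:ℝ)..1, phi h t from rfl]
  linear_combination (2 * ∫ t in (-1:ℝ)..1, phi h t) * hs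

lemma J2_eq {h : ℝ} (hh : 0 < h) : J₂ h = 2*h^2*K h := by
  have e1 := setIntegral_slice h hh (fun x => x^2) (by continuity)
  rw [J₂]
  simp only [e1]
  have hsub := intervalIntegral.smul_integral_comp_mul_left
    (a := (-1:ℝ)) (b := 1) (f := fun x => x^2 * (2 * sfun h x)) (Real.sqrt h)
  rw [show Real.sqrt h * (-1) = -Real.sqrt h by ring, mul_one] at hsub
  rw [← hsub, smul_eq_mul]
  have e2 : ∫ t in (-1:ℝ)..1, (Real.sqrt h * t)^2 * (2 * sfun h (Real.sqrt h * t))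
      = ∫ t in (-1:ℝ)..1, (2*h*Real.sqrt h) * (t^2 * phi h t) := by
    apply intervalIntegral.integral_congr
    intro t ht
    show (Real.sqrt h * t)^2 * (2 * sfun h (Real.sqrt h * t)) = 2*h*Real.sqrt h * (t^2 * phi h t)
    rw [sfun_scaled hh ht, mul_pow, Real.sq_sqrt hh.le]; ring
  rw [e2, intervalIntegral.integral_const_mul]
  have hs : Real.sqrt h * Real.sqrt h = h := Real.mul_self_sqrt hh.le
  rw [show K h = ∫ t in (-1:ℝ)..1, t^2 * phi h t from rfl]
  linear_combination (2 * h * ∫ t in (-1:ℝ)..1, t^2 * phi h t) * hs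

lemma E_combine {h : ℝ} (hh : 0 < h) :
    (G h - 4*K h + 2*h*(Gd h - Kd h) = 0) ∧
    (-2*G h + (h+8)*K h - 2*h*Gd h + (2*h^2+4*h)*Kd h = 0) := by
  have hQ : ∀ t:ℝ, (0:ℝ) < 1 + h*t^2 := fun t => by positivity
  have hQs : ∀ t:ℝ, (0:ℝ) < Real.sqrt (1 + h*t^2) := fun t => Real.sqrt_pos.2 (hQ t)
  have i1 : IntervalIntegrable (fun t => phi h t) volume (-1) 1 :=
    (continuous_phi h hh.le).intervalIntegrable _ _
  have i2 : IntervalIntegrable (fun t => t^2 * phi h t) volume (-1) 1 :=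
    ((continuous_pow 2).mul (continuous_phi h hh.le)).intervalIntegrable _ _
  have i3 : IntervalIntegrable (fun t => dphi h t) volume (-1) 1 :=
    (continuous_dphi h hh.le).intervalIntegrable _ _
  have i4 : IntervalIntegrable (fun t => t^2 * dphi h t) volume (-1) 1 :=
    ((continuous_pow 2).mul (continuous_dphi h hh.le)).intervalIntegrable _ _
  constructor
  · have comb : G h - 4*K h + 2*h*(Gd h - Kd h)
        = ∫ t in (-1:ℝ)..1,
            ((phi h t - 4*(t^2 * phi h t)) + 2*h*(dphi h t - t^2 * dphi h t)) := by
      rw [intervalIntegral.integral_add (i1.sub (i2.const_mul 4)) ((i3.sub i4).const_mul (2*h)),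
        intervalIntegral.integral_sub i1 (i2.const_mul 4),
        intervalIntegral.integral_const_mul,
        intervalIntegral.integral_const_mul,
        intervalIntegral.integral_sub i3 i4]
      rfl

    rw [comb, ← key_integral h hh]
    apply intervalIntegral.integral_congr
    intro t _
    have hb2 : Real.sqrt (1+h*t^2) ^ 2 = 1 + h*t^2 := Real.sq_sqrt (hQ t).le
    simp only [phi, dphi]
    set a := Real.sqrt (1-t^2)
    set b := Real.sqrt (1+h*t^2)
    field_simp
    ring_nf
  · have comb : -2*G h + (h+8)*K h - 2*h*Gd h + (2*h^2+4*h)*Kd h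
        = ∫ t in (-1:ℝ)..1,
            ((((-2)*phi h t + (h+8)*(t^2 * phi h t)) - 2*h*dphi h t)
              + (2*h^2+4*h)*(t^2 * dphi h t)) := by
      rw [intervalIntegral.integral_add
          (((i1.const_mul (-2)).add (i2.const_mul (h+8))).sub (i3.const_mul (2*h)))
          (i4.const_mul (2*h^2+4*h)),
        intervalIntegral.integral_sub ((i1.const_mul (-2)).add (i2.const_mul (h+8)))
          (i3.const_mul (2*h)),
        intervalIntegral.integral_add (i1.const_mul (-2)) (i2.const_mul (h+8)),
        intervalIntegral.integral_const_mul, intervalIntegral.integral_const_mul,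
        intervalIntegral.integral_const_mul, intervalIntegral.integral_const_mul]
      rw [show G h = ∫ t in (-1:ℝ)..1, phi h t from rfl,
        show K h = ∫ t in (-1:ℝ)..1, t^2 * phi h t from rfl,
        show Gd h = ∫ t in (-1:ℝ)..1, dphi h t from rfl,
        show Kd h = ∫ t in (-1:ℝ)..1, t^2 * dphi h t from rfl]
    have key2 : ∫ t in (-1:ℝ)..1, (-2:ℝ) *
        ((1 - 4*t^2 - 3*h*t^4) * Real.sqrt (1-t^2) / ((1+h*t^2) * Real.sqrt (1+h*t^2))) = 0 := by
      rw [intervalIntegral.integral_const_mul, key_integral h hh, mul_zero]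
    rw [comb, ← key2]
    apply intervalIntegral.integral_congr
    intro t _
    have hb2 : Real.sqrt (1+h*t^2) ^ 2 = 1 + h*t^2 := Real.sq_sqrt (hQ t).le
    simp only [phi, dphi]
    set a := Real.sqrt (1-t^2)
    set b := Real.sqrt (1+h*t^2)
    field_simp
    ring_nf

end PF6

open PF6

theorem picard_fuchs_line6 :
    ∀ h : ℝ, 0 < h →
      DifferentiableAt ℝ J₁ h ∧ DifferentiableAt ℝ J₂ h ∧
      J₁ h = 2 * h * deriv J₁ h - 2 * deriv J₂ h ∧
      J₂ h = -(2 * h / 3) * deriv J₁ h + (2 * h / 3 + 4 / 3) * deriv J₂ h := by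
  intro h hh
  have hG := hasDerivAt_G hh
  have hK := hasDerivAt_K hh
  have hJ1 : HasDerivAt J₁ (2*G h + 2*h*Gd h) h := by
    have h1 : HasDerivAt (fun x => 2*x*G x) (2*G h + 2*h*Gd h) h := by
      have := (((hasDerivAt_id h).const_mul (2:ℝ)).mul hG)
      refine this.congr_deriv (Eq.symm ?_)
      simp only [id_eq]
      ring
    apply h1.congr_of_eventuallyEq
    filter_upwards [eventually_gt_nhds hh] with x hx
    exact J1_eq hx
  have hJ2 : HasDerivAt J₂ (4*h*K h + 2*h^2*Kd h) h := by
    have h1 : HasDerivAt (fun x => 2*x^2*K x) (4*h*K h + 2*h^2*Kd h) h := by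
      have := (((hasDerivAt_pow 2 h).const_mul (2:ℝ)).mul hK)
      refine this.congr_deriv (Eq.symm ?_)
      push_cast
      ring
    apply h1.congr_of_eventuallyEq
    filter_upwards [eventually_gt_nhds hh] with x hx
    exact J2_eq hx
  obtain ⟨e1, e2⟩ := E_combine hh
  refine ⟨hJ1.differentiableAt, hJ2.differentiableAt, ?_, ?_⟩
  · rw [hJ1.deriv, hJ2.deriv, J1_eq hh]
    linear_combination (-2*h) * e1
  · rw [hJ1.deriv, hJ2.deriv, J2_eq hh]
    linear_combination (-(2*h/3)) * e2
end
end

section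
/- For h > 0 let Ω(h) = {(x, y) ∈ ℝ² : x² + y² + x²y² < h} (a bounded open set), and for nonnegative integers i, j let J_{ij}(h) = ∬_{Ω(h)} x^i y^j dx dy. Then for all nonnegative integers i, j and all h > 0 the following two identities hold: (j+1)·J_{i+2,j}(h) + (j+3)·J_{i,j+2}(h) + (j+3)·J_{i+2,j+2}(h) = (j+1)·h·J_{ij}(h), and (i+3)·J_{i+2,j}(h) + (i+1)·J_{i,j+2}(h) + (i+3)·J_{i+2,j+2}(h) = (i+1)·h·J_{ij}(h). -/
open MeasureTheory

noncomputable section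

/-- The moment integral `J_{ij}(h) = ∬_{Ω(h)} x^i y^j dx dy`. -/
def Jmom (i j : ℕ) : ℝ → ℝ := fun h => ∫ p in Omeg h, p.1 ^ i * p.2 ^ j

lemma omeg_measurable (h : ℝ) : MeasurableSet (Omeg h) := by
  have : IsOpen (Omeg h) :=
    isOpen_lt (by fun_prop) continuous_const
  exact this.measurableSet

lemma integrableOn_omeg (i j : ℕ) {h : ℝ} (hh : 0 < h) :
    IntegrableOn (fun p : ℝ × ℝ => p.1 ^ i * p.2 ^ j) (Omeg h) := by
  have hsub : Omeg h ⊆ Metric.closedBall 0 (Real.sqrt h) := by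
    intro p hp
    simp only [Omeg, Set.mem_setOf_eq] at hp
    rw [Metric.mem_closedBall, dist_zero_right, Prod.norm_def]
    have h1 : p.1 ^ 2 ≤ h := by nlinarith [sq_nonneg p.1, sq_nonneg p.2, sq_nonneg (p.1 * p.2)]
    have h2 : p.2 ^ 2 ≤ h := by nlinarith [sq_nonneg p.1, sq_nonneg p.2, sq_nonneg (p.1 * p.2)]
    apply max_le <;> rw [Real.norm_eq_abs, ← Real.sqrt_sq_eq_abs] <;>
      exact Real.sqrt_le_sqrt (by assumption)
  exact (((by fun_prop : Continuous fun p : ℝ × ℝ => p.1 ^ i * p.2 ^ j)).continuousOn.integrableOn_compact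
    (isCompact_closedBall _ _)).mono_set hsub

lemma Jswap (i j : ℕ) (h : ℝ) : Jmom i j h = Jmom j i h := by
  have hmp : MeasurePreserving (Prod.swap : ℝ × ℝ → ℝ × ℝ) volume volume := by
    rw [Measure.volume_eq_prod]; exact Measure.measurePreserving_swap
  have hemb : MeasurableEmbedding (Prod.swap : ℝ × ℝ → ℝ × ℝ) :=
    MeasurableEquiv.prodComm.measurableEmbedding
  have hpre : (Prod.swap : ℝ × ℝ → ℝ × ℝ) ⁻¹' Omeg h = Omeg h := by
    ext p
    simp only [Omeg, Set.mem_preimage, Set.mem_setOf_eq, Prod.fst_swap, Prod.snd_swap]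
    rw [show p.2 ^ 2 + p.1 ^ 2 + p.2 ^ 2 * p.1 ^ 2 = p.1 ^ 2 + p.2 ^ 2 + p.1 ^ 2 * p.2 ^ 2 from by ring]
  have key := hmp.setIntegral_preimage_emb hemb (fun p => p.1 ^ j * p.2 ^ i) (Omeg h)
  rw [hpre] at key
  simp only [Prod.fst_swap, Prod.snd_swap] at key
  rw [Jmom, Jmom, ← key]
  exact setIntegral_congr_fun (omeg_measurable h) fun p _ => mul_comm _ _

/-- half-width of the `y`-slice of `Ω(h)` at abscissa `x` -/
def bnd (h x : ℝ) : ℝ := Real.sqrt ((h - x ^ 2) / (1 + x ^ 2))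

lemma slice_eq (h x : ℝ) : {y : ℝ | (x, y) ∈ Omeg h} = Set.Ioo (-(bnd h x)) (bnd h x) := by
  ext y
  simp only [Omeg, Set.mem_setOf_eq, Set.mem_Ioo]
  have h1 : (0:ℝ) < 1 + x ^ 2 := by positivity
  have e1 : x ^ 2 + y ^ 2 + x ^ 2 * y ^ 2 < h ↔ y ^ 2 < (h - x ^ 2) / (1 + x ^ 2) := by
    rw [lt_div_iff₀ h1]
    constructor <;> intro H <;> nlinarith
  rw [e1, show y ^ 2 = |y| ^ 2 from (sq_abs y).symm, ← Real.lt_sqrt (abs_nonneg y), abs_lt, bnd]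

lemma fubini (h : ℝ) (F : ℝ × ℝ → ℝ) (hF : IntegrableOn F (Omeg h)) :
    ∫ p in Omeg h, F p = ∫ x : ℝ, ∫ y in Set.Ioo (-(bnd h x)) (bnd h x), F (x, y) := by
  rw [← integral_indicator (omeg_measurable h)]
  rw [Measure.volume_eq_prod]
  rw [MeasureTheory.integral_prod _
    (by rw [← Measure.volume_eq_prod, integrable_indicator_iff (omeg_measurable h)]; exact hF)]
  congr 1 with x
  rw [← integral_indicator measurableSet_Ioo]
  congr 1 with y
  have hmem : (x, y) ∈ Omeg h ↔ y ∈ Set.Ioo (-(bnd h x)) (bnd h x) := by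
    rw [← slice_eq h x]; rfl
  by_cases hy : (x, y) ∈ Omeg h
  · simp [Set.indicator_apply, hy, hmem.mp hy]
  · have hy' : y ∉ Set.Ioo (-(bnd h x)) (bnd h x) := fun hz => hy (hmem.mpr hz)
    simp [Set.indicator_apply, hy, hy']

lemma inner_zero (i j : ℕ) {h : ℝ} (x : ℝ) :
    ∫ y in Set.Ioo (-(bnd h x)) (bnd h x),
      (((j : ℝ) + 1) * (x ^ (i + 2) * y ^ j) + ((j : ℝ) + 3) * (x ^ i * y ^ (j + 2))
        + ((j : ℝ) + 3) * (x ^ (i + 2) * y ^ (j + 2)) - ((j : ℝ) + 1) * h * (x ^ i * y ^ j)) = 0 := by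
  set b := bnd h x with hbdef
  have hb0 : 0 ≤ b := Real.sqrt_nonneg _
  set f : ℝ → ℝ := fun y => x ^ i * (y ^ (j + 1) * (x ^ 2 + y ^ 2 + x ^ 2 * y ^ 2 - h)) with hfdef
  have key : ∀ y : ℝ, HasDerivAt f
      (((j : ℝ) + 1) * (x ^ (i + 2) * y ^ j) + ((j : ℝ) + 3) * (x ^ i * y ^ (j + 2))
        + ((j : ℝ) + 3) * (x ^ (i + 2) * y ^ (j + 2)) - ((j : ℝ) + 1) * h * (x ^ i * y ^ j)) y := by
    intro y
    have h1 : HasDerivAt (fun y : ℝ => y ^ (j + 1)) ((↑(j + 1) : ℝ) * y ^ j) y := by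
      simpa using hasDerivAt_pow (j + 1) y
    have h2 : HasDerivAt (fun y : ℝ => x ^ 2 + y ^ 2 + x ^ 2 * y ^ 2 - h)
        (2 * y + x ^ 2 * (2 * y)) y := by
      have hy2 : HasDerivAt (fun y : ℝ => y ^ 2) (2 * y) y := by simpa using hasDerivAt_pow 2 y
      exact ((hy2.const_add (x ^ 2)).add (hy2.const_mul (x ^ 2))).sub_const h
    have := ((h1.mul h2).const_mul (x ^ i))
    refine this.congr_deriv ?_
    push_cast
    ring
  have hcont : Continuous fun y : ℝ =>
      (((j : ℝ) + 1) * (x ^ (i + 2) * y ^ j) + ((j : ℝ) + 3) * (x ^ i * y ^ (j + 2))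
        + ((j : ℝ) + 3) * (x ^ (i + 2) * y ^ (j + 2)) - ((j : ℝ) + 1) * h * (x ^ i * y ^ j)) := by
    fun_prop
  rw [← integral_Ioc_eq_integral_Ioo, ← intervalIntegral.integral_of_le (by linarith)]
  rw [intervalIntegral.integral_eq_sub_of_hasDerivAt (fun y _ => key y)
    (hcont.intervalIntegrable _ _)]
  rcases le_or_gt 0 ((h - x ^ 2) / (1 + x ^ 2)) with hc | hc
  · have hb2 : b ^ 2 = (h - x ^ 2) / (1 + x ^ 2) := Real.sq_sqrt hc
    have hx1 : (0:ℝ) < 1 + x ^ 2 := by positivity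
    have hfac : x ^ 2 + b ^ 2 + x ^ 2 * b ^ 2 - h = 0 := by
      rw [hb2]; field_simp; ring
    have hfac' : x ^ 2 + (-b) ^ 2 + x ^ 2 * (-b) ^ 2 - h = 0 := by nlinarith [hfac]
    simp only [hfdef]
    rw [hfac, hfac']
    ring
  · have hb : b = 0 := Real.sqrt_eq_zero_of_nonpos (le_of_lt hc)
    simp [hfdef, hb]

lemma ident1 (i j : ℕ) {h : ℝ} (hh : 0 < h) :
    ((j : ℝ) + 1) * Jmom (i + 2) j h + ((j : ℝ) + 3) * Jmom i (j + 2) h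
      + ((j : ℝ) + 3) * Jmom (i + 2) (j + 2) h = ((j : ℝ) + 1) * h * Jmom i j h := by
  have hA := integrableOn_omeg (i + 2) j hh
  have hB := integrableOn_omeg i (j + 2) hh
  have hC := integrableOn_omeg (i + 2) (j + 2) hh
  have hD := integrableOn_omeg i j hh
  set F : ℝ × ℝ → ℝ := fun p =>
    ((j : ℝ) + 1) * (p.1 ^ (i + 2) * p.2 ^ j) + ((j : ℝ) + 3) * (p.1 ^ i * p.2 ^ (j + 2))
      + ((j : ℝ) + 3) * (p.1 ^ (i + 2) * p.2 ^ (j + 2)) - ((j : ℝ) + 1) * h * (p.1 ^ i * p.2 ^ j)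
    with hFdef
  have hFint : IntegrableOn F (Omeg h) :=
    (((hA.const_mul _).add (hB.const_mul _)).add (hC.const_mul _)).sub (hD.const_mul _)
  have hsplit : ((j : ℝ) + 1) * Jmom (i + 2) j h + ((j : ℝ) + 3) * Jmom i (j + 2) h
        + ((j : ℝ) + 3) * Jmom (i + 2) (j + 2) h - ((j : ℝ) + 1) * h * Jmom i j h
      = ∫ p in Omeg h, F p := by
    simp only [Jmom, hFdef]
    have hA' : IntegrableOn (fun p : ℝ × ℝ => ((j : ℝ) + 1) * (p.1 ^ (i + 2) * p.2 ^ j)) (Omeg h) :=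
      hA.const_mul _
    have hB' : IntegrableOn (fun p : ℝ × ℝ => ((j : ℝ) + 3) * (p.1 ^ i * p.2 ^ (j + 2))) (Omeg h) :=
      hB.const_mul _
    have hC' : IntegrableOn (fun p : ℝ × ℝ => ((j : ℝ) + 3) * (p.1 ^ (i + 2) * p.2 ^ (j + 2))) (Omeg h) :=
      hC.const_mul _
    have hD' : IntegrableOn (fun p : ℝ × ℝ => ((j : ℝ) + 1) * h * (p.1 ^ i * p.2 ^ j)) (Omeg h) :=
      hD.const_mul _
    have hAB : IntegrableOn (fun p : ℝ × ℝ => ((j : ℝ) + 1) * (p.1 ^ (i + 2) * p.2 ^ j)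
        + ((j : ℝ) + 3) * (p.1 ^ i * p.2 ^ (j + 2))) (Omeg h) := hA'.add hB'
    have hABC : IntegrableOn (fun p : ℝ × ℝ => ((j : ℝ) + 1) * (p.1 ^ (i + 2) * p.2 ^ j)
        + ((j : ℝ) + 3) * (p.1 ^ i * p.2 ^ (j + 2))
        + ((j : ℝ) + 3) * (p.1 ^ (i + 2) * p.2 ^ (j + 2))) (Omeg h) := hAB.add hC'
    rw [← integral_const_mul, ← integral_const_mul, ← integral_const_mul, ← integral_const_mul,
      ← integral_add hA' hB', ← integral_add hAB hC', ← integral_sub hABC hD']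
  have hzero : ∫ p in Omeg h, F p = 0 := by
    rw [fubini h F hFint]
    have : ∀ x : ℝ, ∫ y in Set.Ioo (-(bnd h x)) (bnd h x), F (x, y) = 0 := fun x => inner_zero i j x
    simp only [this, integral_zero]
  linarith [hsplit, hzero]

theorem moment_recurrences (i j : ℕ) :
    ∀ h : ℝ, 0 < h →
      (((j : ℝ) + 1) * Jmom (i + 2) j h + ((j : ℝ) + 3) * Jmom i (j + 2) h
          + ((j : ℝ) + 3) * Jmom (i + 2) (j + 2) h
        = ((j : ℝ) + 1) * h * Jmom i j h) ∧
      (((i : ℝ) + 3) * Jmom (i + 2) j h + ((i : ℝ) + 1) * Jmom i (j + 2) h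
          + ((i : ℝ) + 3) * Jmom (i + 2) (j + 2) h
        = ((i : ℝ) + 1) * h * Jmom i j h) := by
  intro h hh
  refine ⟨ident1 i j hh, ?_⟩
  have := ident1 j i hh
  rw [Jswap (j + 2) i, Jswap j (i + 2), Jswap (j + 2) (i + 2), Jswap j i] at this
  linarith
end
end
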